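/- arXiv:1807.11375 — 8 statements merged into one kernel-verified Lean document; each statement's English description precedes it below -/
import Mathlib

section
/- Let P ⊆ ℝ^d be a closed spanning pointed convex cone with interior Ω, and let A ⊆ ℝ^d be a nonempty closed set with A + P ⊆ A and A ≠ ℝ^d. Then for every a ∈ Ω there exists n ≥ 1 such that (A + na) ∩ (−Ω) = ∅. -/
/-!
If some translate `x + n • a` with `x ∈ A` lay in `-interior P`, then `-(n • a) ∈ A`, since `A`
absorbs `P`. As `a` is interior to the cone `P`, for any `y` and large `n` the point `n • a + y`
lies in `P`, so `y = -(n • a) + (n • a + y) ∈ A`. Choosing `y ∉ A` gives the required `n`.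
-/

open Filter Topology Set

section Cone

variable {E : Type*} [AddCommGroup E] [Module ℝ E] [TopologicalSpace E] [ContinuousAdd E]
  [ContinuousSMul ℝ E] {P : Set E}

theorem eventually_smul_add_mem_of_mem_interior
    (hcone : ∀ c : ℝ, 0 < c → ∀ x ∈ P, c • x ∈ P) {a : E} (ha : a ∈ interior P) (v : E) :
    ∀ᶠ t : ℝ in atTop, t • a + v ∈ P := by
  have hlim : Tendsto (fun t : ℝ => a + t⁻¹ • v) atTop (𝓝 a) := by
    simpa using tendsto_const_nhds.add ((tendsto_inv_atTop_zero (𝕜 := ℝ)).smul_const v)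
  filter_upwards [hlim.eventually (isOpen_interior.mem_nhds ha), eventually_gt_atTop 0]
    with t ht_int ht_pos
  have hscaled := hcone t ht_pos _ (interior_subset ht_int)
  rwa [smul_add, smul_smul, mul_inv_cancel₀ ht_pos.ne', one_smul] at hscaled

end Cone

section Module

variable {E : Type*} [AddCommGroup E] {P A : Set E}

theorem neg_mem_of_add_mem_neg (hA_mod : ∀ x ∈ A, ∀ p ∈ P, x + p ∈ A) {x b : E} (hx : x ∈ A)
    (hxb : x + b ∈ -P) : -b ∈ A := by
  simpa using hA_mod x hx _ hxb

theorem mem_of_neg_mem_of_add_mem (hA_mod : ∀ x ∈ A, ∀ p ∈ P, x + p ∈ A) {b y : E}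
    (hb : -b ∈ A) (hby : b + y ∈ P) : y ∈ A := by
  simpa using hA_mod _ hb _ hby

end Module

theorem module_translate_misses_neg_interior_general {d : ℕ}
    (P A : Set (EuclideanSpace ℝ (Fin d)))
    (hcone : ∀ (c : ℝ), 0 ≤ c → ∀ x ∈ P, c • x ∈ P)
    (hA_mod : ∀ x ∈ A, ∀ p ∈ P, x + p ∈ A)
    (hA_proper : A ≠ Set.univ) :
    ∀ a ∈ interior P, ∃ n : ℕ, 1 ≤ n ∧
      ((fun y => y + (n : ℝ) • a) '' A) ∩ (-(interior P)) = ∅ := by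
  intro a ha
  obtain ⟨y, hy⟩ := (ne_univ_iff_exists_notMem A).mp hA_proper
  have hray := eventually_smul_add_mem_of_mem_interior (fun c hc => hcone c hc.le) ha y
  obtain ⟨n, hn_mem, hn_pos⟩ :=
    ((tendsto_natCast_atTop_atTop.eventually hray).and (eventually_ge_atTop 1)).exists
  refine ⟨n, hn_pos, eq_empty_of_forall_notMem ?_⟩
  rintro _ ⟨⟨x, hx, rfl⟩, hx_neg⟩
  exact hy (mem_of_neg_mem_of_add_mem hA_mod
    (neg_mem_of_add_mem_neg hA_mod hx (neg_subset_neg.mpr interior_subset hx_neg)) hn_mem)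

/-- For a proper `P`-module `A` and `a` in the interior of `P`, some translate `A + n • a`
misses `-interior P`. -/
theorem module_translate_misses_neg_interior {d : ℕ}
    (P A : Set (EuclideanSpace ℝ (Fin d)))
    (hclosed : IsClosed P) (hconv : Convex ℝ P)
    (hcone : ∀ (c : ℝ), 0 ≤ c → ∀ x ∈ P, c • x ∈ P)
    (hspan : ∀ x : EuclideanSpace ℝ (Fin d), ∃ a ∈ P, ∃ b ∈ P, x = a - b)
    (hpointed : P ∩ (-P) = {0})
    (hA_ne : A.Nonempty) (hA_closed : IsClosed A)
    (hA_mod : ∀ x ∈ A, ∀ p ∈ P, x + p ∈ A)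
    (hA_proper : A ≠ Set.univ) :
    ∀ a ∈ interior P, ∃ n : ℕ, 1 ≤ n ∧
      ((fun y => y + (n : ℝ) • a) '' A) ∩ (-(interior P)) = ∅ :=
  module_translate_misses_neg_interior_general P A hcone hA_mod hA_proper
end

section
/- Let G be a topological group, P ⊆ ℝ^d a closed spanning pointed convex cone with interior Ω, and φ : Ω → G a continuous map satisfying φ(a+b) = φ(a)φ(b) for all a, b ∈ Ω. Then φ extends uniquely to a continuous group homomorphism from ℝ^d to G. -/
/-!
Since `φ` is additive on `Ω = interior P`, its values on `Ω` commute pairwise, and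
`ψ x := φ (x + b) * (φ b)⁻¹` does not depend on the choice of `b ∈ Ω` with `x + b ∈ Ω`; such
a `b` exists because `P - P = ℝ^d` and `Ω` is nonempty. On the open set `Ω - b` the map `ψ` is
a translate of `φ`, hence continuous, and a homomorphism agreeing with `φ` on `Ω` is forced to
be `ψ` by `ψ x * φ b = φ (x + b)`.
-/

section Extension

variable {V G : Type*} [AddCommGroup V] [Group G] {Ω : Set V} {φ : V → G}

theorem commute_of_map_add (hφ : ∀ a ∈ Ω, ∀ b ∈ Ω, φ (a + b) = φ a * φ b)
    {a b : V} (ha : a ∈ Ω) (hb : b ∈ Ω) : Commute (φ a) (φ b) := by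
  rw [Commute, SemiconjBy, ← hφ a ha b hb, ← hφ b hb a ha, add_comm]

theorem map_add_mul_inv_eq (hφ : ∀ a ∈ Ω, ∀ b ∈ Ω, φ (a + b) = φ a * φ b) {x b c : V}
    (hb : b ∈ Ω) (hxb : x + b ∈ Ω) (hc : c ∈ Ω) (hxc : x + c ∈ Ω) :
    φ (x + b) * (φ b)⁻¹ = φ (x + c) * (φ c)⁻¹ := by
  have key : φ (x + c) * φ b = φ (x + b) * φ c := by
    rw [← hφ _ hxc _ hb, ← hφ _ hxb _ hc, add_right_comm]
  rw [mul_inv_eq_iff_eq_mul, mul_assoc, (commute_of_map_add hφ hc hb).inv_left.eq, ← mul_assoc,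
    key, mul_inv_cancel_right]

variable (φ) in
noncomputable def extendHom (hΩ : ∀ x, ∃ b ∈ Ω, x + b ∈ Ω) (x : V) : G :=
  φ (x + (hΩ x).choose) * (φ (hΩ x).choose)⁻¹

variable (hφ : ∀ a ∈ Ω, ∀ b ∈ Ω, φ (a + b) = φ a * φ b) (hΩ : ∀ x, ∃ b ∈ Ω, x + b ∈ Ω)
include hφ

theorem extendHom_eq {x b : V} (hb : b ∈ Ω) (hxb : x + b ∈ Ω) :
    extendHom φ hΩ x = φ (x + b) * (φ b)⁻¹ :=
  have ⟨hc, hxc⟩ := (hΩ x).choose_spec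
  map_add_mul_inv_eq hφ hc hxc hb hxb

theorem extendHom_of_mem {a : V} (ha : a ∈ Ω) : extendHom φ hΩ a = φ a := by
  obtain ⟨b, hb, hab⟩ := hΩ a
  rw [extendHom_eq hφ hΩ hb hab, hφ a ha b hb, mul_inv_cancel_right]

theorem extendHom_add (hadd : ∀ a ∈ Ω, ∀ b ∈ Ω, a + b ∈ Ω) (x y : V) :
    extendHom φ hΩ (x + y) = extendHom φ hΩ x * extendHom φ hΩ y := by
  obtain ⟨b, hb, hxb⟩ := hΩ x
  obtain ⟨c, hc, hyc⟩ := hΩ y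
  have hsum : x + y + (b + c) = (x + b) + (y + c) := add_add_add_comm x y b c
  rw [extendHom_eq hφ hΩ hb hxb, extendHom_eq hφ hΩ hc hyc,
    extendHom_eq hφ hΩ (hadd b hb c hc) (hsum ▸ hadd _ hxb _ hyc), hsum, hφ _ hxb _ hyc,
    hφ b hb c hc]
  calc φ (x + b) * φ (y + c) * (φ b * φ c)⁻¹
      = φ (x + b) * (φ (y + c) * (φ b)⁻¹) * (φ c)⁻¹ := by
        rw [(commute_of_map_add hφ hb hc).eq]; group
    _ = φ (x + b) * (φ b)⁻¹ * (φ (y + c) * (φ c)⁻¹) := by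
        rw [(commute_of_map_add hφ hyc hb).inv_right.eq]; group

theorem continuous_extendHom [TopologicalSpace V] [ContinuousAdd V] [TopologicalSpace G]
    [ContinuousMul G] (hopen : IsOpen Ω) (hcont : ContinuousOn φ Ω) :
    Continuous (extendHom φ hΩ) := by
  refine continuous_iff_continuousAt.2 fun x => ?_
  obtain ⟨b, hb, hxb⟩ := hΩ x
  have hnhds : {y | y + b ∈ Ω} ∈ nhds x :=
    (hopen.preimage (continuous_add_const b)).mem_nhds hxb
  have htranslate : ContinuousAt (fun y => φ (y + b) * (φ b)⁻¹) x :=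
    (ContinuousAt.comp (f := (· + b)) (hcont.continuousAt (hopen.mem_nhds hxb))
      (continuous_add_const b).continuousAt).mul continuousAt_const
  exact htranslate.congr
    (Filter.eventually_of_mem hnhds fun y hy => (extendHom_eq hφ hΩ hb hy).symm)

end Extension

theorem eq_of_eqOn_of_map_add {V G : Type*} [AddCommGroup V] [Group G] {Ω : Set V}
    {ψ₁ ψ₂ : V → G} (h₁ : ∀ x y, ψ₁ (x + y) = ψ₁ x * ψ₁ y)
    (h₂ : ∀ x y, ψ₂ (x + y) = ψ₂ x * ψ₂ y) (heq : Set.EqOn ψ₁ ψ₂ Ω)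
    (hΩ : ∀ x, ∃ b ∈ Ω, x + b ∈ Ω) : ψ₁ = ψ₂ := by
  funext x
  obtain ⟨b, hb, hxb⟩ := hΩ x
  have h : ψ₁ x * ψ₁ b = ψ₂ x * ψ₂ b := by rw [← h₁, ← h₂, heq hxb]
  rwa [heq hb, mul_left_inj] at h

theorem Convex.add_mem_of_smul_mem {𝕜 E : Type*} [Field 𝕜] [LinearOrder 𝕜]
    [IsStrictOrderedRing 𝕜] [AddCommGroup E] [Module 𝕜 E] {P : Set E} (hconv : Convex 𝕜 P)
    (hcone : ∀ c : 𝕜, 0 ≤ c → ∀ x ∈ P, c • x ∈ P) {a b : E} (ha : a ∈ P) (hb : b ∈ P) :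
    a + b ∈ P := by
  have hmid := hconv ha hb (by norm_num : (0 : 𝕜) ≤ 2⁻¹) (by norm_num : (0 : 𝕜) ≤ 2⁻¹)
    (by norm_num)
  convert hcone 2 zero_le_two _ hmid using 1
  module

theorem add_mem_interior_of_add_mem {E : Type*} [TopologicalSpace E] [AddGroup E]
    [ContinuousAdd E] {P : Set E} (hadd : ∀ a ∈ P, ∀ b ∈ P, a + b ∈ P) {a b : E} (ha : a ∈ P)
    (hb : b ∈ interior P) : a + b ∈ interior P := by
  have htranslate : (a + ·) '' interior P ⊆ P := by
    rintro _ ⟨c, hc, rfl⟩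
    exact hadd a ha c (interior_subset hc)
  exact interior_maximal htranslate (isOpenMap_add_left a _ isOpen_interior) ⟨b, hb, rfl⟩

theorem Convex.interior_nonempty_of_forall_eq_sub {E : Type*} [NormedAddCommGroup E]
    [NormedSpace ℝ E] [FiniteDimensional ℝ E] {P : Set E} (hconv : Convex ℝ P)
    (hspan : ∀ x, ∃ a ∈ P, ∃ b ∈ P, x = a - b) : (interior P).Nonempty := by
  have hne : P.Nonempty := let ⟨a, ha, _⟩ := hspan 0; ⟨a, ha⟩
  rw [hconv.interior_nonempty_iff_affineSpan_eq_top,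
    AffineSubspace.affineSpan_eq_top_iff_vectorSpan_eq_top_of_nonempty ℝ E E hne, vectorSpan_def,
    Submodule.eq_top_iff']
  intro x
  obtain ⟨a, ha, b, hb, rfl⟩ := hspan x
  exact Submodule.subset_span (Set.vsub_mem_vsub ha hb)

theorem Convex.exists_mem_interior_add_mem_interior {E : Type*} [NormedAddCommGroup E]
    [NormedSpace ℝ E] [FiniteDimensional ℝ E] {P : Set E} (hconv : Convex ℝ P)
    (hadd : ∀ a ∈ P, ∀ b ∈ P, a + b ∈ P) (hspan : ∀ x, ∃ a ∈ P, ∃ b ∈ P, x = a - b) (x : E) :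
    ∃ b ∈ interior P, x + b ∈ interior P := by
  obtain ⟨e, he⟩ := hconv.interior_nonempty_of_forall_eq_sub hspan
  obtain ⟨a, ha, b, hb, rfl⟩ := hspan x
  refine ⟨b + e, add_mem_interior_of_add_mem hadd hb he, ?_⟩
  rw [← add_assoc, sub_add_cancel]
  exact add_mem_interior_of_add_mem hadd ha he

theorem interior_hom_extends_general {d : ℕ} {G : Type*}
    [Group G] [TopologicalSpace G] [IsTopologicalGroup G]
    (P : Set (EuclideanSpace ℝ (Fin d)))
    (hconv : Convex ℝ P)
    (hcone : ∀ (c : ℝ), 0 ≤ c → ∀ x ∈ P, c • x ∈ P)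
    (hspan : ∀ x : EuclideanSpace ℝ (Fin d), ∃ a ∈ P, ∃ b ∈ P, x = a - b)
    (φ : EuclideanSpace ℝ (Fin d) → G)
    (hcont : ContinuousOn φ (interior P))
    (hhom : ∀ a ∈ interior P, ∀ b ∈ interior P, φ (a + b) = φ a * φ b) :
    ∃! ψ : EuclideanSpace ℝ (Fin d) → G,
      Continuous ψ ∧ (∀ x y, ψ (x + y) = ψ x * ψ y) ∧ ∀ a ∈ interior P, ψ a = φ a := by
  have hadd : ∀ a ∈ P, ∀ b ∈ P, a + b ∈ P := fun a ha b hb =>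
    hconv.add_mem_of_smul_mem hcone ha hb
  have hdec := hconv.exists_mem_interior_add_mem_interior hadd hspan
  have hΩadd : ∀ a ∈ interior P, ∀ b ∈ interior P, a + b ∈ interior P := fun a ha b hb =>
    add_mem_interior_of_add_mem hadd (interior_subset ha) hb
  refine ⟨extendHom φ hdec, ⟨continuous_extendHom hhom hdec isOpen_interior hcont,
    extendHom_add hhom hdec hΩadd, fun a ha => extendHom_of_mem hhom hdec ha⟩, ?_⟩
  rintro ψ ⟨-, hψ, hψφ⟩
  exact eq_of_eqOn_of_map_add hψ (extendHom_add hhom hdec hΩadd)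
    (fun a ha => (hψφ a ha).trans (extendHom_of_mem hhom hdec ha).symm) hdec

/-- A continuous semigroup homomorphism from the interior of a closed spanning pointed
convex cone into a topological group extends uniquely to a continuous group homomorphism
on all of `ℝ^d`. -/
theorem interior_hom_extends {d : ℕ} {G : Type*}
    [Group G] [TopologicalSpace G] [IsTopologicalGroup G]
    (P : Set (EuclideanSpace ℝ (Fin d)))
    (hclosed : IsClosed P) (hconv : Convex ℝ P)
    (hcone : ∀ (c : ℝ), 0 ≤ c → ∀ x ∈ P, c • x ∈ P)
    (hspan : ∀ x : EuclideanSpace ℝ (Fin d), ∃ a ∈ P, ∃ b ∈ P, x = a - b)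
    (hpointed : P ∩ (-P) = {0})
    (φ : EuclideanSpace ℝ (Fin d) → G)
    (hcont : ContinuousOn φ (interior P))
    (hhom : ∀ a ∈ interior P, ∀ b ∈ interior P, φ (a + b) = φ a * φ b) :
    ∃! ψ : EuclideanSpace ℝ (Fin d) → G,
      Continuous ψ ∧ (∀ x y, ψ (x + y) = ψ x * ψ y) ∧ ∀ a ∈ interior P, ψ a = φ a :=
  interior_hom_extends_general P hconv hcone hspan φ hcont hhom
end

section
/- Let P ⊆ ℝ^d be a closed spanning pointed convex cone and A a strictly upper triangular d × d real matrix. If the multiplier ω_A(x,y) = exp(i⟨Ax, y⟩) on P is a coboundary (i.e., ω_A(x,y) = f(x)f(y)f(x+y)^{-1} for some continuous f : P → 𝕋), then A = 0. -/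
/-!
The coboundary `f x * f y * (f (x + y))⁻¹` is symmetric in `x` and `y`, so `exp (i⟨Ax, y⟩)` is too.
Scaling `x` along the cone forces `⟨Ax, y⟩ = ⟨Ay, x⟩` on `P`, and since `P - P` is everything the
bilinear form of `A` is symmetric. A symmetric strictly upper triangular matrix vanishes.
-/

open Complex

theorem eq_zero_of_forall_nonneg_exp_mul_I_eq_one {c : ℝ}
    (h : ∀ t : ℝ, 0 ≤ t → exp (↑(t * c) * I) = 1) : c = 0 := by
  by_contra hc
  have hre := congrArg re (h (Real.pi / |c|) (by positivity))
  rw [exp_ofReal_mul_I_re, ← Real.cos_abs, abs_mul, abs_div, abs_abs, abs_of_pos Real.pi_pos,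
    div_mul_cancel₀ _ (abs_ne_zero.2 hc), Real.cos_pi, one_re] at hre
  norm_num at hre

namespace LinearMap.BilinForm

variable {E : Type*} [AddCommGroup E] [Module ℝ E] (B : LinearMap.BilinForm ℝ E) {P : Set E}

theorem apply_eq_apply_of_exp_mul_I_eq (hcone : ∀ c : ℝ, 0 ≤ c → ∀ x ∈ P, c • x ∈ P)
    (h : ∀ x ∈ P, ∀ y ∈ P, exp (↑(B x y) * I) = exp (↑(B y x) * I))
    {x y : E} (hx : x ∈ P) (hy : y ∈ P) : B x y = B y x := by
  rw [← sub_eq_zero]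
  refine eq_zero_of_forall_nonneg_exp_mul_I_eq_one fun t ht => ?_
  have hscaled := h _ (hcone t ht x hx) y hy
  simp only [map_smul, LinearMap.smul_apply, smul_eq_mul] at hscaled
  rw [mul_sub, ofReal_sub, sub_mul, exp_sub, hscaled, div_self (exp_ne_zero _)]

theorem isSymm_of_forall_mem_sub_of_eqOn (hspan : ∀ x : E, ∃ a ∈ P, ∃ b ∈ P, x = a - b)
    (h : ∀ x ∈ P, ∀ y ∈ P, B x y = B y x) : B.IsSymm := by
  refine ⟨fun x y => ?_⟩
  obtain ⟨a, ha, b, hb, rfl⟩ := hspan x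
  obtain ⟨a', ha', b', hb', rfl⟩ := hspan y
  simp only [map_sub, LinearMap.sub_apply]
  rw [h a ha a' ha', h a ha b' hb', h b hb a' ha', h b hb b' hb']
  ring

end LinearMap.BilinForm

theorem Matrix.eq_zero_of_isSymm_of_forall_le {n α : Type*} [LinearOrder n] [Zero α]
    {A : Matrix n n α} (hA : A.IsSymm) (hupper : ∀ i j, j ≤ i → A i j = 0) : A = 0 := by
  ext i j
  rcases le_total j i with h | h
  · exact hupper i j h
  · rw [← hA.apply i j]
    exact hupper j i h

theorem strictly_upper_triangular_coboundary_eq_zero_general {d : ℕ}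
    (P : Set (EuclideanSpace ℝ (Fin d)))
    (hcone : ∀ (c : ℝ), 0 ≤ c → ∀ x ∈ P, c • x ∈ P)
    (hspan : ∀ x : EuclideanSpace ℝ (Fin d), ∃ a ∈ P, ∃ b ∈ P, x = a - b)
    (A : Matrix (Fin d) (Fin d) ℝ)
    (hupper : ∀ i j : Fin d, j ≤ i → A i j = 0)
    (f : EuclideanSpace ℝ (Fin d) → ℂ)
    (hcobound : ∀ x ∈ P, ∀ y ∈ P,
      Complex.exp (Complex.I * ((∑ i, (∑ j, A i j * x j) * y i : ℝ) : ℂ))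
        = f x * f y * (f (x + y))⁻¹) :
    A = 0 := by
  let L := (WithLp.linearEquiv 2 ℝ (Fin d → ℝ)).toLinearMap
  let B : LinearMap.BilinForm ℝ (EuclideanSpace ℝ (Fin d)) := A.toBilin'.compl₁₂ L L
  have hB : ∀ x y, B y x = ∑ i, (∑ j, A i j * x j) * y i := fun x y => by
    simp [B, L, Matrix.toBilin'_apply', dotProduct, Matrix.mulVec, mul_comm]
  have hexp : ∀ x ∈ P, ∀ y ∈ P, exp (↑(B x y) * I) = exp (↑(B y x) * I) := by
    intro x hx y hy
    rw [hB, hB, mul_comm, hcobound y hy x hx, mul_comm _ I, hcobound x hx y hy, add_comm,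
      mul_comm (f x)]
  have hBsymm : B.IsSymm := B.isSymm_of_forall_mem_sub_of_eqOn hspan
    fun x hx y hy => B.apply_eq_apply_of_exp_mul_I_eq hcone hexp hx hy
  have hAsymm : A.IsSymm :=
    Matrix.isSymm_toBilin'_iff_isSymm.1 ⟨fun u v => hBsymm.eq (WithLp.toLp 2 u) (WithLp.toLp 2 v)⟩
  exact A.eq_zero_of_isSymm_of_forall_le hAsymm hupper

/-- If `A` is a strictly upper triangular real `d × d` matrix and the multiplier
`ω_A(x,y) = exp(i⟨Ax, y⟩)` on a closed spanning pointed convex cone `P` is a coboundary,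
then `A = 0`. -/
theorem strictly_upper_triangular_coboundary_eq_zero {d : ℕ}
    (P : Set (EuclideanSpace ℝ (Fin d)))
    (hclosed : IsClosed P) (hconv : Convex ℝ P)
    (hcone : ∀ (c : ℝ), 0 ≤ c → ∀ x ∈ P, c • x ∈ P)
    (hspan : ∀ x : EuclideanSpace ℝ (Fin d), ∃ a ∈ P, ∃ b ∈ P, x = a - b)
    (hpointed : P ∩ (-P) = {0})
    (A : Matrix (Fin d) (Fin d) ℝ)
    (hupper : ∀ i j : Fin d, j ≤ i → A i j = 0)
    (f : EuclideanSpace ℝ (Fin d) → ℂ)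
    (hf_cont : ContinuousOn f P)
    (hf_unit : ∀ x ∈ P, ‖f x‖ = 1)
    (hcobound : ∀ x ∈ P, ∀ y ∈ P,
      Complex.exp (Complex.I * ((∑ i, (∑ j, A i j * x j) * y i : ℝ) : ℂ))
        = f x * f y * (f (x + y))⁻¹) :
    A = 0 :=
  strictly_upper_triangular_coboundary_eq_zero_general P hcone hspan A hupper f hcobound
end

section
/- Let K₁, K₂, K₃ be complex Hilbert spaces and U_σ the unitary on K₁ ⊗ K₂ ⊗ K₃ flipping the first and second tensor components. If f₁ ⊗ F₂₃ = U_σ(g₂ ⊗ G₁₃) for some nonzero f₁ ∈ K₁, F₂₃ ∈ K₂ ⊗ K₃, g₂ ∈ K₂, G₁₃ ∈ K₁ ⊗ K₃, then there exists f₃ ∈ K₃ such that f₁ ⊗ F₂₃ = f₁ ⊗ g₂ ⊗ f₃. -/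
open scoped TensorProduct

/-! Pairing the first factor with a functional `φ` satisfying `φ f₁ = 1` sends `f₁ ⊗ F₂₃` to
`F₂₃`, while on the flipped side it only acts on `G₁₃`, leaving `g₂` as the first factor. -/

namespace TensorProduct

section Contraction

variable {R M N P : Type*} [CommSemiring R]
  [AddCommMonoid M] [Module R M] [AddCommMonoid N] [Module R N] [AddCommMonoid P] [Module R P]

theorem lid_comp_rTensor_comp_leftComm (φ : Module.Dual R M) :
    (TensorProduct.lid R (N ⊗[R] P)).toLinearMap ∘ₗ φ.rTensor (N ⊗[R] P) ∘ₗ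
        (leftComm R N M P).toLinearMap =
      ((TensorProduct.lid R P).toLinearMap ∘ₗ φ.rTensor P).lTensor N :=
  ext_threefold' fun n m p => by simp [tmul_smul]

end Contraction

variable {K M N P : Type*} [Field K]
  [AddCommGroup M] [Module K M] [AddCommGroup N] [Module K N] [AddCommGroup P] [Module K P]

theorem exists_eq_tmul_of_tmul_eq_leftComm {m : M} (hm : m ≠ 0) {x : N ⊗[K] P} {n : N}
    {y : M ⊗[K] P} (h : m ⊗ₜ[K] x = leftComm K N M P (n ⊗ₜ[K] y)) :
    ∃ p : P, x = n ⊗ₜ[K] p := by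
  obtain ⟨φ, hφ⟩ := Module.Projective.exists_dual_eq_one K hm
  refine ⟨TensorProduct.lid K P (φ.rTensor P y), ?_⟩
  have := congrArg (TensorProduct.lid K (N ⊗[K] P) ∘ φ.rTensor (N ⊗[K] P)) h
  simpa [hφ] using this.trans (LinearMap.congr_fun (lid_comp_rTensor_comp_leftComm φ) _)

end TensorProduct

/-- If `f₁ ⊗ F₂₃ = U_σ (g₂ ⊗ G₁₃)` where `U_σ` flips the first and second tensor
components, and `f₁ ≠ 0`, then `F₂₃ = g₂ ⊗ f₃` for some `f₃`. -/
theorem flip_tensor_factorization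
    {K₁ K₂ K₃ : Type*}
    [NormedAddCommGroup K₁] [InnerProductSpace ℂ K₁]
    [NormedAddCommGroup K₂] [InnerProductSpace ℂ K₂]
    [NormedAddCommGroup K₃] [InnerProductSpace ℂ K₃]
    (U : (K₂ ⊗[ℂ] (K₁ ⊗[ℂ] K₃)) ≃ₗ[ℂ] (K₁ ⊗[ℂ] (K₂ ⊗[ℂ] K₃)))
    (hU : ∀ (x : K₁) (y : K₂) (z : K₃),
      U (y ⊗ₜ (x ⊗ₜ z)) = x ⊗ₜ[ℂ] (y ⊗ₜ[ℂ] z))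
    (f₁ : K₁) (F₂₃ : K₂ ⊗[ℂ] K₃) (g₂ : K₂) (G₁₃ : K₁ ⊗[ℂ] K₃)
    (hf₁ : f₁ ≠ 0)
    (heq : f₁ ⊗ₜ[ℂ] F₂₃ = U (g₂ ⊗ₜ[ℂ] G₁₃)) :
    ∃ f₃ : K₃, f₁ ⊗ₜ[ℂ] F₂₃ = f₁ ⊗ₜ[ℂ] (g₂ ⊗ₜ[ℂ] f₃) := by
  have hU_eq : U = TensorProduct.leftComm ℂ K₂ K₁ K₃ :=
    LinearEquiv.toLinearMap_injective <| TensorProduct.ext_threefold' fun y x z => hU x y z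
  obtain ⟨f₃, hF₂₃⟩ :=
    TensorProduct.exists_eq_tmul_of_tmul_eq_leftComm hf₁ (hU_eq ▸ heq)
  exact ⟨f₃, by rw [hF₂₃]⟩
end

section
/- Let α be an E₀-semigroup over P on B(H) and let ω₁, ω₂ be multipliers on P. If α admits both an ω₁-unit and an ω₂-unit, then ω₁ and ω₂ are cohomologous, i.e., there exists a continuous g : P → 𝕋 with ω₁(x,y)g(x)g(y)g(x+y)^{-1} = ω₂(x,y) for all x, y ∈ P. -/
open ContinuousLinearMap
open Filter Topology
open scoped InnerProductSpace ComplexConjugate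

/-! For a unit vector `e` put `c x = ⟪v x e, u x e⟫`. Since both units intertwine `α x`, the
operator `(v x)† (u x)` lies in the commutant of `B(H)`, hence equals `c x • 1`, and the unit
relations give `c (x + y) = conj (ω₂ x y) * ω₁ x y * c x * c y`. At `0` both units are nonzero
scalars, so `c 0 ≠ 0`; a zero of `c` at `x` would propagate to the points `x / 2ⁿ → 0`, so by
continuity `c` has no zero on `P`, and `g = c / ‖c‖` is the required cochain. -/

namespace ContinuousLinearMap

variable {𝕜 H : Type*} [RCLike 𝕜] [NormedAddCommGroup H] [InnerProductSpace 𝕜 H]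

theorem eq_inner_smul_one_of_forall_comm {e : H} (he : ‖e‖ = 1) {A : H →L[𝕜] H}
    (hA : ∀ T : H →L[𝕜] H, A ∘L T = T ∘L A) : A = ⟪e, A e⟫_𝕜 • 1 := by
  ext ξ
  have h := congr($(hA ((innerSL 𝕜 e).smulRight ξ)) e)
  simpa [inner_self_eq_norm_sq_to_K, he] using h

theorem inner_apply_apply_ne_zero_of_forall_comm {e : H} (he : ‖e‖ = 1) {A B : H →L[𝕜] H}
    (hA : ∀ T : H →L[𝕜] H, A ∘L T = T ∘L A) (hB : ∀ T : H →L[𝕜] H, B ∘L T = T ∘L B)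
    (hA₀ : A ≠ 0) (hB₀ : B ≠ 0) : ⟪B e, A e⟫_𝕜 ≠ 0 := by
  have hA' := eq_inner_smul_one_of_forall_comm he hA
  have hB' := eq_inner_smul_one_of_forall_comm he hB
  generalize ⟪e, A e⟫_𝕜 = a at hA'
  generalize ⟪e, B e⟫_𝕜 = b at hB'
  subst hA' hB'
  have ha : a ≠ 0 := by rintro rfl; simp at hA₀
  have hb : b ≠ 0 := by rintro rfl; simp at hB₀
  simp [inner_smul_left, inner_smul_right, inner_self_eq_norm_sq_to_K, he, ha, hb]

variable [CompleteSpace H]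

theorem adjoint_comp_comm_of_intertwines (β : (H →L[𝕜] H) →⋆ₐ[𝕜] (H →L[𝕜] H))
    {u v : H →L[𝕜] H} (hu : ∀ T, β T ∘L u = u ∘L T) (hv : ∀ T, β T ∘L v = v ∘L T)
    (T : H →L[𝕜] H) : (adjoint v ∘L u) ∘L T = T ∘L (adjoint v ∘L u) := by
  have hv' : adjoint v ∘L β T = T ∘L adjoint v := by
    have h := congr(adjoint $(hv (adjoint T)))
    rwa [adjoint_comp, adjoint_comp, adjoint_adjoint, ← star_eq_adjoint (β _), ← map_star,
      star_eq_adjoint, adjoint_adjoint] at h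
  rw [comp_assoc, ← hu, ← comp_assoc, hv', comp_assoc]

theorem adjoint_comp_eq_inner_smul_one_of_intertwines {e : H} (he : ‖e‖ = 1)
    (β : (H →L[𝕜] H) →⋆ₐ[𝕜] (H →L[𝕜] H)) {u v : H →L[𝕜] H}
    (hu : ∀ T, β T ∘L u = u ∘L T) (hv : ∀ T, β T ∘L v = v ∘L T) :
    adjoint v ∘L u = ⟪v e, u e⟫_𝕜 • 1 := by
  rw [eq_inner_smul_one_of_forall_comm he (adjoint_comp_comm_of_intertwines β hu hv)]
  simp [adjoint_inner_right]

theorem inner_comp_apply_comp_apply {u₁ u₂ v₁ v₂ : H →L[𝕜] H} {c₁ c₂ : 𝕜}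
    (h₁ : adjoint v₁ ∘L u₁ = c₁ • 1) (h₂ : adjoint v₂ ∘L u₂ = c₂ • 1) (a b : H) :
    ⟪(v₁ ∘L v₂) a, (u₁ ∘L u₂) b⟫_𝕜 = c₁ * c₂ * ⟪a, b⟫_𝕜 := by
  calc ⟪(v₁ ∘L v₂) a, (u₁ ∘L u₂) b⟫_𝕜 = ⟪v₂ a, (adjoint v₁ ∘L u₁) (u₂ b)⟫_𝕜 := by
        simp [adjoint_inner_right]
    _ = c₁ * ⟪a, (adjoint v₂ ∘L u₂) b⟫_𝕜 := by
        simp [h₁, inner_smul_right, adjoint_inner_right]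
    _ = c₁ * c₂ * ⟪a, b⟫_𝕜 := by
        simp [h₂, inner_smul_right, mul_assoc]

end ContinuousLinearMap

theorem ContinuousWithinAt.ne_of_eq_imp_half_eq {E Y : Type*} [AddCommMonoid E] [Module ℝ E]
    [TopologicalSpace E] [ContinuousSMul ℝ E] [TopologicalSpace Y] [T2Space Y]
    {P : Set E} {f : E → Y} {z : Y} (hf : ContinuousWithinAt f P 0) (hf₀ : f 0 ≠ z)
    (hP : ∀ x ∈ P, (2 : ℝ)⁻¹ • x ∈ P) (hhalf : ∀ x ∈ P, f x = z → f ((2 : ℝ)⁻¹ • x) = z) :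
    ∀ x ∈ P, f x ≠ z := by
  intro x hx hfx
  have hseq : ∀ n : ℕ, ((2 : ℝ)⁻¹ ^ n • x) ∈ P ∧ f ((2 : ℝ)⁻¹ ^ n • x) = z := by
    intro n
    induction n with
    | zero => simpa using ⟨hx, hfx⟩
    | succ n ih =>
      rw [pow_succ', mul_smul]
      exact ⟨hP _ ih.1, hhalf _ ih.1 ih.2⟩
  have hto : Tendsto (fun n : ℕ => (2 : ℝ)⁻¹ ^ n • x) atTop (𝓝[P] 0) := by
    refine tendsto_nhdsWithin_of_tendsto_nhds_of_eventually_within _ ?_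
      (Eventually.of_forall fun n => (hseq n).1)
    simpa using (tendsto_pow_atTop_nhds_zero_of_lt_one (r := (2 : ℝ)⁻¹) (by norm_num)
      (by norm_num)).smul_const x
  refine hf₀ (tendsto_nhds_unique (hf.tendsto.comp hto) ?_)
  simp only [Function.comp_def, (hseq _).2, tendsto_const_nhds]

theorem forall_ne_zero_of_twisted_mul {E : Type*} [AddCommMonoid E] [Module ℝ E]
    [TopologicalSpace E] [ContinuousSMul ℝ E] {P : Set E} {ω₁ ω₂ : E → E → ℂ} {c : E → ℂ}
    (hω₁ : ∀ x ∈ P, ∀ y ∈ P, ‖ω₁ x y‖ = 1) (hω₂ : ∀ x ∈ P, ∀ y ∈ P, ‖ω₂ x y‖ = 1)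
    (hP : ∀ x ∈ P, (2 : ℝ)⁻¹ • x ∈ P) (hc : ContinuousWithinAt c P 0) (hc₀ : c 0 ≠ 0)
    (hmul : ∀ x ∈ P, ∀ y ∈ P, c (x + y) = conj (ω₂ x y) * ω₁ x y * (c x * c y)) :
    ∀ x ∈ P, c x ≠ 0 := by
  refine hc.ne_of_eq_imp_half_eq hc₀ hP fun x hx hcx => ?_
  have hx' := hP x hx
  have h₁ : ω₁ _ _ ≠ 0 := norm_ne_zero_iff.1 ((hω₁ _ hx' _ hx').trans_ne one_ne_zero)
  have h₂ : ω₂ _ _ ≠ 0 := norm_ne_zero_iff.1 ((hω₂ _ hx' _ hx').trans_ne one_ne_zero)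
  have hxx := hmul _ hx' _ hx'
  rw [← add_smul, show (2 : ℝ)⁻¹ + 2⁻¹ = 1 by norm_num, one_smul, hcx] at hxx
  simpa [eq_comm (a := (0 : ℂ)), h₁, h₂] using hxx

theorem exists_cohomologous_of_twisted_mul {E : Type*} [Add E] [TopologicalSpace E] {P : Set E}
    {ω₁ ω₂ : E → E → ℂ} {c : E → ℂ} (hω₁ : ∀ x ∈ P, ∀ y ∈ P, ‖ω₁ x y‖ = 1)
    (hω₂ : ∀ x ∈ P, ∀ y ∈ P, ‖ω₂ x y‖ = 1) (hc : ContinuousOn c P) (hc₀ : ∀ x ∈ P, c x ≠ 0)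
    (hmul : ∀ x ∈ P, ∀ y ∈ P, c (x + y) = conj (ω₂ x y) * ω₁ x y * (c x * c y)) :
    ∃ g : E → ℂ, ContinuousOn g P ∧ (∀ x ∈ P, ‖g x‖ = 1) ∧
      ∀ x ∈ P, ∀ y ∈ P, ω₁ x y * g x * g y * (g (x + y))⁻¹ = ω₂ x y := by
  refine ⟨fun x => c x / ‖c x‖, ?_, fun x hx => ?_, fun x hx y hy => ?_⟩
  · exact hc.div (Complex.continuous_ofReal.comp_continuousOn hc.norm) fun x hx => by
      simpa using hc₀ x hx
  · simp [hc₀ x hx]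
  · have h₁ := hω₁ x hx y hy
    have h₂ := hω₂ x hx y hy
    have hconj : ω₂ x y * conj (ω₂ x y) = 1 := by
      rw [Complex.mul_conj, Complex.normSq_eq_norm_sq, h₂]; norm_num
    have hx₀ := hc₀ x hx
    have hy₀ := hc₀ y hy
    have hnx : (‖c x‖ : ℂ) ≠ 0 := by simpa using hx₀
    have hny : (‖c y‖ : ℂ) ≠ 0 := by simpa using hy₀
    have h₁₀ : ω₁ x y ≠ 0 := by rintro h; simp [h] at h₁
    have h₂₀ : conj (ω₂ x y) ≠ 0 := by rintro h; simp [h] at hconj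
    simp only [hmul x hx y hy, norm_mul, Complex.norm_conj, h₁, h₂, one_mul]
    push_cast
    field_simp
    linear_combination -hconj

theorem units_multipliers_cohomologous_general {d : ℕ}
    {H : Type*} [NormedAddCommGroup H] [InnerProductSpace ℂ H] [CompleteSpace H]
    (P : Set (EuclideanSpace ℝ (Fin d)))
    (hcone : ∀ (c : ℝ), 0 ≤ c → ∀ x ∈ P, c • x ∈ P)
    (α : EuclideanSpace ℝ (Fin d) → (H →L[ℂ] H) →⋆ₐ[ℂ] (H →L[ℂ] H))
    (hzero : ∀ A : H →L[ℂ] H, α 0 A = A)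
    (ω₁ ω₂ : EuclideanSpace ℝ (Fin d) → EuclideanSpace ℝ (Fin d) → ℂ)
    (hω₁_unit : ∀ x ∈ P, ∀ y ∈ P, ‖ω₁ x y‖ = 1)
    (hω₂_unit : ∀ x ∈ P, ∀ y ∈ P, ‖ω₂ x y‖ = 1)
    (u v : EuclideanSpace ℝ (Fin d) → H →L[ℂ] H)
    (hu_cont : ∀ ξ : H, ContinuousOn (fun x => u x ξ) P)
    (hu_int : ∀ x ∈ P, ∀ T : H →L[ℂ] H, α x T ∘L u x = u x ∘L T)
    (hu_sem : ∀ x ∈ P, ∀ y ∈ P, u (x + y) = ω₁ x y • (u x ∘L u y))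
    (hu_ne : ∃ x ∈ P, u x ≠ 0)
    (hv_cont : ∀ ξ : H, ContinuousOn (fun x => v x ξ) P)
    (hv_int : ∀ x ∈ P, ∀ T : H →L[ℂ] H, α x T ∘L v x = v x ∘L T)
    (hv_sem : ∀ x ∈ P, ∀ y ∈ P, v (x + y) = ω₂ x y • (v x ∘L v y))
    (hv_ne : ∃ x ∈ P, v x ≠ 0) :
    ∃ g : EuclideanSpace ℝ (Fin d) → ℂ, ContinuousOn g P ∧ (∀ x ∈ P, ‖g x‖ = 1) ∧
      ∀ x ∈ P, ∀ y ∈ P, ω₁ x y * g x * g y * (g (x + y))⁻¹ = ω₂ x y := by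
  obtain ⟨x₀, hx₀, hux₀⟩ := hu_ne
  obtain ⟨x₁, hx₁, hvx₁⟩ := hv_ne
  have : Nontrivial H :=
    (subsingleton_or_nontrivial H).resolve_left fun _ => hux₀ (Subsingleton.elim _ _)
  obtain ⟨e, he⟩ := exists_norm_eq H zero_le_one
  have h0 : (0 : EuclideanSpace ℝ (Fin d)) ∈ P := by simpa using hcone 0 le_rfl x₀ hx₀
  set c := fun x => ⟪v x e, u x e⟫_ℂ
  have hscal : ∀ x ∈ P, adjoint (v x) ∘L u x = c x • 1 := fun x hx =>
    adjoint_comp_eq_inner_smul_one_of_intertwines he (α x) (hu_int x hx) (hv_int x hx)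
  have hmul : ∀ x ∈ P, ∀ y ∈ P, c (x + y) = conj (ω₂ x y) * ω₁ x y * (c x * c y) := by
    intro x hx y hy
    simp only [c, hu_sem x hx y hy, hv_sem x hx y hy, smul_apply, inner_smul_left,
      inner_smul_right, inner_comp_apply_comp_apply (hscal x hx) (hscal y hy),
      inner_self_eq_norm_sq_to_K, he, RCLike.ofReal_one, one_pow, mul_one]
    ring
  have hc₀ : c 0 ≠ 0 := inner_apply_apply_ne_zero_of_forall_comm he
    (fun T => by simpa [hzero] using (hu_int 0 h0 T).symm)
    (fun T => by simpa [hzero] using (hv_int 0 h0 T).symm)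
    (fun h => hux₀ (by simpa [h] using hu_sem x₀ hx₀ 0 h0))
    (fun h => hvx₁ (by simpa [h] using hv_sem x₁ hx₁ 0 h0))
  have hcont : ContinuousOn c P := (hv_cont e).inner (hu_cont e)
  exact exists_cohomologous_of_twisted_mul hω₁_unit hω₂_unit hcont
    (forall_ne_zero_of_twisted_mul hω₁_unit hω₂_unit (fun x hx => hcone _ (by norm_num) x hx)
      (hcont 0 h0) hc₀ hmul) hmul

/-- If an E₀-semigroup over a cone `P` admits both an ω₁-unit and an ω₂-unit, then the
multipliers ω₁ and ω₂ are cohomologous. -/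
theorem units_multipliers_cohomologous {d : ℕ}
    {H : Type*} [NormedAddCommGroup H] [InnerProductSpace ℂ H] [CompleteSpace H]
    (P : Set (EuclideanSpace ℝ (Fin d)))
    (hclosed : IsClosed P) (hconv : Convex ℝ P)
    (hcone : ∀ (c : ℝ), 0 ≤ c → ∀ x ∈ P, c • x ∈ P)
    (hspan : ∀ x : EuclideanSpace ℝ (Fin d), ∃ a ∈ P, ∃ b ∈ P, x = a - b)
    (hpointed : P ∩ (-P) = {0})
    (α : EuclideanSpace ℝ (Fin d) → (H →L[ℂ] H) →⋆ₐ[ℂ] (H →L[ℂ] H))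
    (hsem : ∀ x ∈ P, ∀ y ∈ P, ∀ A : H →L[ℂ] H, α x (α y A) = α (x + y) A)
    (hzero : ∀ A : H →L[ℂ] H, α 0 A = A)
    (hweak : ∀ (A : H →L[ℂ] H) (ξ η : H),
      ContinuousOn (fun x => (inner ℂ (α x A ξ) η : ℂ)) P)
    (ω₁ ω₂ : EuclideanSpace ℝ (Fin d) → EuclideanSpace ℝ (Fin d) → ℂ)
    (hω₁_cont : ContinuousOn (fun p : EuclideanSpace ℝ (Fin d) × EuclideanSpace ℝ (Fin d) =>
      ω₁ p.1 p.2) (P ×ˢ P))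
    (hω₁_unit : ∀ x ∈ P, ∀ y ∈ P, ‖ω₁ x y‖ = 1)
    (hω₁_mult : ∀ x ∈ P, ∀ y ∈ P, ∀ z ∈ P, ω₁ x y * ω₁ (x + y) z = ω₁ x (y + z) * ω₁ y z)
    (hω₂_cont : ContinuousOn (fun p : EuclideanSpace ℝ (Fin d) × EuclideanSpace ℝ (Fin d) =>
      ω₂ p.1 p.2) (P ×ˢ P))
    (hω₂_unit : ∀ x ∈ P, ∀ y ∈ P, ‖ω₂ x y‖ = 1)
    (hω₂_mult : ∀ x ∈ P, ∀ y ∈ P, ∀ z ∈ P, ω₂ x y * ω₂ (x + y) z = ω₂ x (y + z) * ω₂ y z)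
    (u v : EuclideanSpace ℝ (Fin d) → H →L[ℂ] H)
    (hu_cont : ∀ ξ : H, ContinuousOn (fun x => u x ξ) P)
    (hu_int : ∀ x ∈ P, ∀ T : H →L[ℂ] H, α x T ∘L u x = u x ∘L T)
    (hu_sem : ∀ x ∈ P, ∀ y ∈ P, u (x + y) = ω₁ x y • (u x ∘L u y))
    (hu_ne : ∃ x ∈ P, u x ≠ 0)
    (hv_cont : ∀ ξ : H, ContinuousOn (fun x => v x ξ) P)
    (hv_int : ∀ x ∈ P, ∀ T : H →L[ℂ] H, α x T ∘L v x = v x ∘L T)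
    (hv_sem : ∀ x ∈ P, ∀ y ∈ P, v (x + y) = ω₂ x y • (v x ∘L v y))
    (hv_ne : ∃ x ∈ P, v x ≠ 0) :
    ∃ g : EuclideanSpace ℝ (Fin d) → ℂ, ContinuousOn g P ∧ (∀ x ∈ P, ‖g x‖ = 1) ∧
      ∀ x ∈ P, ∀ y ∈ P, ω₁ x y * g x * g y * (g (x + y))⁻¹ = ω₂ x y :=
  units_multipliers_cohomologous_general P hcone α hzero ω₁ ω₂ hω₁_unit hω₂_unit u v hu_cont hu_int
    hu_sem hu_ne hv_cont hv_int hv_sem hv_ne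
end

section
/- Let P = ℝ₊ × ℝ₊, a < 0 < b, and A_T = ([a,∞) × [b,∞)) ⊔ ([0,∞) × [0,b)). Then the shift semigroup {S^{A_T}_x}_{x∈P} on L²(A_T) does not satisfy the commutation relation (S^{A_T}_{(0,t)})* S^{A_T}_{(s,0)} = S^{A_T}_{(s,0)} (S^{A_T}_{(0,t)})* for all s, t ≥ 0; in particular it is not conjugate to the standard shift {S_x}_{x∈P} on L²(P), which does satisfy this relation. -/
/-!
On `L²(B)` the adjoint of the shift by `x` is `f ↦ f (· + x)`, because `B + x ⊆ B` and
Lebesgue measure is translation invariant. Hence, on `B`, `S_x^* S_y f = (1_B f) (· + x - y)`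
while `S_y S_x^* f = 1_B (· - y) f (· + x - y)`, and the two agree for every `f` as soon as
`z - y ∈ B ↔ z + x - y ∈ B` for `z ∈ B`. For the quadrant and `x = (0, t)`,
`y = (s, 0)` both conditions say `s ≤ z.1`. For `A_T`, `x = (0, b)`, `y = (-a, 0)` the square
`(0, -a) × (0, b) ⊆ A_T` is moved into `A_T` by `z ↦ z + x - y` but out of it by `z ↦ z - y`;
testing on the indicator of its translate breaks the relation. A unitary intertwining two
representations also intertwines their adjoints, so it would transport the relation.
-/

open MeasureTheory ContinuousLinearMap

open scoped InnerProductSpace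

section Shift

variable {G : Type*} [MeasurableSpace G] [AddCommGroup G] [MeasurableAdd G]
  {μ : Measure G} [μ.IsAddRightInvariant] {B : Set G} {x y : G}

theorem map_add_right_restrict_le (hx : ∀ z ∈ B, z + x ∈ B) :
    (μ.restrict B).map (· + x) ≤ μ.restrict B := by
  refine Measure.le_iff.2 fun s hs => ?_
  rw [Measure.map_apply (measurable_add_const x) hs, Measure.restrict_apply hs,
    Measure.restrict_apply (measurable_add_const x hs)]
  calc μ ((· + x) ⁻¹' s ∩ B) ≤ μ ((· + x) ⁻¹' (s ∩ B)) :=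
        measure_mono fun z hz => ⟨hz.1, hx z hz.2⟩
    _ = μ (s ∩ B) := measure_preimage_add_right _ _ _

theorem quasiMeasurePreserving_add_right_restrict (hx : ∀ z ∈ B, z + x ∈ B) :
    Measure.QuasiMeasurePreserving (· + x) (μ.restrict B) (μ.restrict B) :=
  ⟨measurable_add_const x, (map_add_right_restrict_le hx).absolutelyContinuous⟩

theorem memLp_comp_add_right {E : Type*} [NormedAddCommGroup E] {p : ENNReal}
    (hx : ∀ z ∈ B, z + x ∈ B) (f : Lp E p (μ.restrict B)) :
    MemLp (fun z => f (z + x)) p (μ.restrict B) := by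
  have hle := map_add_right_restrict_le (μ := μ) hx
  refine ⟨(Lp.aestronglyMeasurable f).comp_quasiMeasurePreserving
    (quasiMeasurePreserving_add_right_restrict hx), ?_⟩
  calc eLpNorm (fun z => f (z + x)) p (μ.restrict B)
      = eLpNorm f p ((μ.restrict B).map (· + x)) :=
        (eLpNorm_map_measure ((Lp.aestronglyMeasurable f).mono_measure hle)
          (measurable_add_const x).aemeasurable).symm
    _ ≤ eLpNorm f p (μ.restrict B) := eLpNorm_mono_measure _ hle
    _ < ⊤ := Lp.eLpNorm_lt_top f

variable {𝕜 E : Type*} [RCLike 𝕜] [NormedAddCommGroup E] [InnerProductSpace 𝕜 E]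
  [CompleteSpace E]

variable (μ B) in
def IsShiftBy (x : G) (T : Lp E 2 (μ.restrict B) →L[𝕜] Lp E 2 (μ.restrict B)) : Prop :=
  ∀ f, T f =ᵐ[μ.restrict B] fun z => B.indicator f (z - x)

variable {T S : Lp E 2 (μ.restrict B) →L[𝕜] Lp E 2 (μ.restrict B)}

theorem IsShiftBy.adjoint_ae_eq (hT : IsShiftBy μ B x T) (hB : MeasurableSet B)
    (hx : ∀ z ∈ B, z + x ∈ B) (f : Lp E 2 (μ.restrict B)) :
    adjoint T f =ᵐ[μ.restrict B] fun z => f (z + x) := by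
  have hf := memLp_comp_add_right hx f
  suffices adjoint T f = hf.toLp _ from this ▸ hf.coeFn_toLp
  refine ext_inner_left 𝕜 fun g => ?_
  let ψ : G → 𝕜 := fun y => ⟪B.indicator g (y - x), B.indicator f y⟫_𝕜
  calc ⟪g, adjoint T f⟫_𝕜 = ⟪T g, f⟫_𝕜 := adjoint_inner_right _ _ _
    _ = ∫ y, ψ y ∂μ := by
        rw [L2.inner_def, ← integral_indicator hB]
        refine integral_congr_ae ?_
        filter_upwards [(ae_eq_restrict_iff_indicator_ae_eq hB).1 (hT g)] with y hy
        by_cases hyB : y ∈ B <;> simp_all [ψ]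
    _ = ∫ z, ψ (z + x) ∂μ := (integral_add_right_eq_self ψ x).symm
    _ = ⟪g, hf.toLp _⟫_𝕜 := by
        rw [L2.inner_def, ← integral_indicator hB]
        refine integral_congr_ae ?_
        filter_upwards [(ae_eq_restrict_iff_indicator_ae_eq hB).1 hf.coeFn_toLp] with z hz
        by_cases hzB : z ∈ B <;> simp_all [ψ]

theorem IsShiftBy.adjoint_apply_ae_eq (hT : IsShiftBy μ B x T) (hS : IsShiftBy μ B y S)
    (hB : MeasurableSet B) (hx : ∀ z ∈ B, z + x ∈ B) (f : Lp E 2 (μ.restrict B)) :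
    adjoint T (S f) =ᵐ[μ.restrict B] fun z => B.indicator f (z + x - y) := by
  filter_upwards [hT.adjoint_ae_eq hB hx (S f),
    (quasiMeasurePreserving_add_right_restrict hx).ae_eq_comp (hS f)] with z h1 h2
  rw [h1]
  exact h2

theorem IsShiftBy.apply_adjoint_ae_eq (hT : IsShiftBy μ B x T) (hS : IsShiftBy μ B y S)
    (hB : MeasurableSet B) (hx : ∀ z ∈ B, z + x ∈ B) (f : Lp E 2 (μ.restrict B)) :
    S (adjoint T f) =ᵐ[μ.restrict B] fun z => B.indicator (fun w => f (w + x)) (z - y) := by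
  have h := (ae_eq_restrict_iff_indicator_ae_eq hB).1 (hT.adjoint_ae_eq hB hx f)
  filter_upwards [hS (adjoint T f), ae_restrict_of_ae
    ((measurePreserving_sub_right μ y).quasiMeasurePreserving.ae_eq_comp h)] with z h1 h2
  rw [h1]
  exact h2

theorem IsShiftBy.adjoint_comp_eq_comp_adjoint (hT : IsShiftBy μ B x T)
    (hS : IsShiftBy μ B y S) (hB : MeasurableSet B) (hx : ∀ z ∈ B, z + x ∈ B)
    (hy : ∀ z ∈ B, z - y ∈ B ↔ z + x - y ∈ B) :
    adjoint T ∘L S = S ∘L adjoint T := by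
  ext1 f
  refine Lp.ext ?_
  filter_upwards [hT.adjoint_apply_ae_eq hS hB hx f, hT.apply_adjoint_ae_eq hS hB hx f,
    ae_restrict_mem hB] with z h1 h2 hz
  rw [comp_apply, comp_apply, h1, h2]
  by_cases hzy : z - y ∈ B
  · simp [Set.indicator_of_mem hzy, Set.indicator_of_mem ((hy z hz).1 hzy), sub_add_eq_add_sub]
  · simp [Set.indicator_of_notMem hzy, Set.indicator_of_notMem (mt (hy z hz).2 hzy)]

theorem IsShiftBy.adjoint_comp_ne_comp_adjoint [Nontrivial E] (hT : IsShiftBy μ B x T)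
    (hS : IsShiftBy μ B y S) (hB : MeasurableSet B) (hx : ∀ z ∈ B, z + x ∈ B)
    {Z : Set G} (hZ : MeasurableSet Z) (hZ0 : μ Z ≠ 0) (hZtop : μ Z ≠ ⊤) (hZB : Z ⊆ B)
    (hin : ∀ z ∈ Z, z + x - y ∈ B) (hout : ∀ z ∈ Z, z - y ∉ B) :
    adjoint T ∘L S ≠ S ∘L adjoint T := by
  intro hcomm
  obtain ⟨c, hc⟩ := exists_ne (0 : E)
  -- on `Z`, `T^* S` maps the indicator of `Z + x - y` to `c`, while `S T^*` maps it to `0`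
  set R := (· + (y - x)) ⁻¹' Z
  have hR : MeasurableSet R := measurable_add_const _ hZ
  have hfR : MemLp (R.indicator fun _ => c) 2 (μ.restrict B) := by
    refine memLp_indicator_const 2 hR c
      (Or.inr (ne_top_of_le_ne_top ?_ (Measure.restrict_apply_le _ _)))
    rwa [measure_preimage_add_right]
  set f := hfR.toLp _
  have hf := (ae_eq_restrict_iff_indicator_ae_eq hB).1 hfR.coeFn_toLp
  have hfalse : ∀ᵐ z ∂μ.restrict Z, False := by
    filter_upwards [ae_restrict_of_ae_restrict_of_subset hZB (hT.adjoint_apply_ae_eq hS hB hx f),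
      ae_restrict_of_ae_restrict_of_subset hZB (hT.apply_adjoint_ae_eq hS hB hx f),
      ae_restrict_of_ae_restrict_of_subset hZB (Lp.ext_iff.1 congr($hcomm f)),
      ae_restrict_of_ae
        ((measurePreserving_add_right μ (x - y)).quasiMeasurePreserving.ae_eq_comp hf),
      ae_restrict_mem hZ] with z h1 h2 h3 h4 hz
    have hzR : z + x - y ∈ R := by simpa [R] using hz
    rw [comp_apply, comp_apply, h1, h2, Set.indicator_of_notMem (hout z hz),
      Set.indicator_of_mem (hin z hz)] at h3
    simp only [Function.comp_apply, ← add_sub_assoc, Set.indicator_of_mem (hin z hz),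
      Set.indicator_of_mem hzR] at h4
    exact hc (h4 ▸ h3)
  exact hZ0 (ae_restrict_eq_bot.1 (Filter.eventually_false_iff_eq_bot.1 hfalse))

end Shift

section Conjugation

variable {𝕜 E F : Type*} [RCLike 𝕜] [NormedAddCommGroup E] [InnerProductSpace 𝕜 E]
  [CompleteSpace E] [NormedAddCommGroup F] [InnerProductSpace 𝕜 F] [CompleteSpace F]
  (U : E ≃ₗᵢ[𝕜] F)

theorem LinearIsometryEquiv.map_adjoint_apply {V : E →L[𝕜] E} {W : F →L[𝕜] F}
    (h : ∀ f, U (V f) = W (U f)) (f : E) : U (adjoint V f) = adjoint W (U f) := by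
  refine ext_inner_left 𝕜 fun v => ?_
  calc ⟪v, U (adjoint V f)⟫_𝕜 = ⟪U.symm v, adjoint V f⟫_𝕜 := by
        rw [← U.inner_map_map, U.apply_symm_apply]
    _ = ⟪V (U.symm v), f⟫_𝕜 := adjoint_inner_right _ _ _
    _ = ⟪W v, U f⟫_𝕜 := by rw [← U.inner_map_map, h, U.apply_symm_apply]
    _ = ⟪v, adjoint W (U f)⟫_𝕜 := (adjoint_inner_right _ _ _).symm

theorem LinearIsometryEquiv.adjoint_comp_eq_comp_adjoint_of_conj {V₁ V₂ : E →L[𝕜] E}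
    {W₁ W₂ : F →L[𝕜] F} (h₁ : ∀ f, U (V₁ f) = W₁ (U f)) (h₂ : ∀ f, U (V₂ f) = W₂ (U f))
    (hW : adjoint W₂ ∘L W₁ = W₁ ∘L adjoint W₂) :
    adjoint V₂ ∘L V₁ = V₁ ∘L adjoint V₂ := by
  ext1 f
  apply U.injective
  simp only [comp_apply, U.map_adjoint_apply h₂, h₁]
  exact congr($hW (U f))

end Conjugation

section Staircase

variable {a b : ℝ} {z x : ℝ × ℝ}

theorem add_mem_staircase (ha : a ≤ 0)
    (hz : z ∈ Set.Ici a ×ˢ Set.Ici b ∪ Set.Ici 0 ×ˢ Set.Ico 0 b) (hx₁ : 0 ≤ x.1) (hx₂ : 0 ≤ x.2) :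
    z + x ∈ Set.Ici a ×ˢ Set.Ici b ∪ Set.Ici 0 ×ˢ Set.Ico 0 b := by
  simp only [Set.mem_union, Set.mem_prod, Set.mem_Ici, Set.mem_Ico, Prod.fst_add,
    Prod.snd_add] at hz ⊢
  grind

theorem mem_staircase_of_mem_Ioo (hz : z ∈ Set.Ioo 0 (-a) ×ˢ Set.Ioo 0 b) :
    z ∈ Set.Ici a ×ˢ Set.Ici b ∪ Set.Ici 0 ×ˢ Set.Ico 0 b := by
  simp only [Set.mem_union, Set.mem_prod, Set.mem_Ici, Set.mem_Ico, Set.mem_Ioo] at hz ⊢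
  grind

theorem add_sub_mem_staircase (hz : z ∈ Set.Ioo 0 (-a) ×ˢ Set.Ioo 0 b) :
    z + (0, b) - (-a, 0) ∈ Set.Ici a ×ˢ Set.Ici b ∪ Set.Ici 0 ×ˢ Set.Ico 0 b := by
  simp only [Set.mem_union, Set.mem_prod, Set.mem_Ici, Set.mem_Ico, Set.mem_Ioo, Prod.fst_add,
    Prod.snd_add, Prod.fst_sub, Prod.snd_sub] at hz ⊢
  grind

theorem sub_notMem_staircase (hz : z ∈ Set.Ioo 0 (-a) ×ˢ Set.Ioo 0 b) :
    z - (-a, 0) ∉ Set.Ici a ×ˢ Set.Ici b ∪ Set.Ici 0 ×ˢ Set.Ico 0 b := by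
  simp only [Set.mem_union, Set.mem_prod, Set.mem_Ici, Set.mem_Ico, Set.mem_Ioo,
    Prod.fst_sub, Prod.snd_sub] at hz ⊢
  grind

theorem add_mem_quadrant (hz : z ∈ Set.Ici (0 : ℝ) ×ˢ Set.Ici (0 : ℝ)) (hx₁ : 0 ≤ x.1)
    (hx₂ : 0 ≤ x.2) : z + x ∈ Set.Ici (0 : ℝ) ×ˢ Set.Ici (0 : ℝ) := by
  simp only [Set.mem_prod, Set.mem_Ici, Prod.fst_add, Prod.snd_add] at hz ⊢
  grind

theorem sub_mem_quadrant_iff {s t : ℝ} (ht : 0 ≤ t)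
    (hz : z ∈ Set.Ici (0 : ℝ) ×ˢ Set.Ici (0 : ℝ)) :
    z - (s, 0) ∈ Set.Ici (0 : ℝ) ×ˢ Set.Ici (0 : ℝ) ↔
      z + (0, t) - (s, 0) ∈ Set.Ici (0 : ℝ) ×ˢ Set.Ici (0 : ℝ) := by
  simp only [Set.mem_prod, Set.mem_Ici, Prod.fst_add, Prod.snd_add, Prod.fst_sub,
    Prod.snd_sub] at hz ⊢
  grind

end Staircase

/-- For `P = ℝ₊ × ℝ₊`, `a < 0 < b` and
`A_T = ([a,∞) × [b,∞)) ⊔ ([0,∞) × [0,b))`, the shift semigroup on `L²(A_T)` does not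
satisfy the commutation relation `S_{(0,t)}^* S_{(s,0)} = S_{(s,0)} S_{(0,t)}^*`, while the
standard shift on `L²(P)` does; consequently the two isometric representations are not
conjugate. -/
theorem shift_AT_not_conjugate_standard (a b : ℝ) (ha : a < 0) (hb : 0 < b)
    (AT : Set (ℝ × ℝ))
    (hAT : AT = (Set.Ici a ×ˢ Set.Ici b) ∪ (Set.Ici 0 ×ˢ Set.Ico 0 b))
    (S : ℝ × ℝ → (Lp ℂ 2 ((volume : Measure (ℝ × ℝ)).restrict AT) →L[ℂ]
      Lp ℂ 2 ((volume : Measure (ℝ × ℝ)).restrict AT)))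
    (hS : ∀ x : ℝ × ℝ, 0 ≤ x.1 → 0 ≤ x.2 →
      ∀ f : Lp ℂ 2 ((volume : Measure (ℝ × ℝ)).restrict AT),
      (S x f : ℝ × ℝ → ℂ) =ᵐ[(volume : Measure (ℝ × ℝ)).restrict AT]
        fun y => Set.indicator AT (⇑f) (y - x))
    (Q : Set (ℝ × ℝ)) (hQ : Q = Set.Ici 0 ×ˢ Set.Ici 0)
    (S' : ℝ × ℝ → (Lp ℂ 2 ((volume : Measure (ℝ × ℝ)).restrict Q) →L[ℂ]
      Lp ℂ 2 ((volume : Measure (ℝ × ℝ)).restrict Q)))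
    (hS' : ∀ x : ℝ × ℝ, 0 ≤ x.1 → 0 ≤ x.2 →
      ∀ f : Lp ℂ 2 ((volume : Measure (ℝ × ℝ)).restrict Q),
      (S' x f : ℝ × ℝ → ℂ) =ᵐ[(volume : Measure (ℝ × ℝ)).restrict Q]
        fun y => Set.indicator Q (⇑f) (y - x)) :
    (¬ ∀ s t : ℝ, 0 ≤ s → 0 ≤ t →
        ContinuousLinearMap.adjoint (S ((0 : ℝ), t)) ∘L S (s, (0 : ℝ))
          = S (s, (0 : ℝ)) ∘L ContinuousLinearMap.adjoint (S ((0 : ℝ), t))) ∧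
    (∀ s t : ℝ, 0 ≤ s → 0 ≤ t →
        ContinuousLinearMap.adjoint (S' ((0 : ℝ), t)) ∘L S' (s, (0 : ℝ))
          = S' (s, (0 : ℝ)) ∘L ContinuousLinearMap.adjoint (S' ((0 : ℝ), t))) ∧
    ¬ ∃ U : Lp ℂ 2 ((volume : Measure (ℝ × ℝ)).restrict AT) ≃ₗᵢ[ℂ]
          Lp ℂ 2 ((volume : Measure (ℝ × ℝ)).restrict Q),
        ∀ x : ℝ × ℝ, 0 ≤ x.1 → 0 ≤ x.2 → ∀ f, U (S x f) = S' x (U f) := by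
  subst hAT hQ
  have hATm : MeasurableSet (Set.Ici a ×ˢ Set.Ici b ∪ Set.Ici 0 ×ˢ Set.Ico 0 b) :=
    (measurableSet_Ici.prod measurableSet_Ici).union (measurableSet_Ici.prod measurableSet_Ico)
  have ha' : 0 < -a := neg_pos.2 ha
  have not_comm : ¬ ∀ s t : ℝ, 0 ≤ s → 0 ≤ t →
      adjoint (S ((0 : ℝ), t)) ∘L S (s, (0 : ℝ))
        = S (s, (0 : ℝ)) ∘L adjoint (S ((0 : ℝ), t)) :=
    fun h => IsShiftBy.adjoint_comp_ne_comp_adjoint (hS (0, b) le_rfl hb.le)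
      (hS (-a, 0) ha'.le le_rfl) hATm (fun _ hz => add_mem_staircase ha.le hz le_rfl hb.le)
      (measurableSet_Ioo.prod measurableSet_Ioo)
      ((isOpen_Ioo.prod isOpen_Ioo).measure_ne_zero volume
        ((Set.nonempty_Ioo.2 ha').prod (Set.nonempty_Ioo.2 hb)))
      ((Metric.isBounded_Ioo 0 (-a)).prod (Metric.isBounded_Ioo 0 b)).measure_lt_top.ne
      (fun _ => mem_staircase_of_mem_Ioo) (fun _ => add_sub_mem_staircase)
      (fun _ => sub_notMem_staircase) (h (-a) b ha'.le hb.le)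
  have comm : ∀ s t : ℝ, 0 ≤ s → 0 ≤ t →
      adjoint (S' ((0 : ℝ), t)) ∘L S' (s, (0 : ℝ))
        = S' (s, (0 : ℝ)) ∘L adjoint (S' ((0 : ℝ), t)) :=
    fun s t hs ht => IsShiftBy.adjoint_comp_eq_comp_adjoint (hS' (0, t) le_rfl ht)
      (hS' (s, 0) hs le_rfl) (measurableSet_Ici.prod measurableSet_Ici)
      (fun _ hz => add_mem_quadrant hz le_rfl ht) (fun _ => sub_mem_quadrant_iff ht)
  refine ⟨not_comm, comm, fun ⟨U, hU⟩ => not_comm fun s t hs ht => ?_⟩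
  exact U.adjoint_comp_eq_comp_adjoint_of_conj (hU _ hs le_rfl) (hU _ le_rfl ht) (comm s t hs ht)
end

section
/- Let α be an E₀-semigroup over P on B(H) in standard form with invariant unit vector Ω (⟨Ω, α_x(X)Ω⟩ = ⟨Ω, XΩ⟩ for all x, X). Then the formula T_x(XΩ) := α_x(X)Ω for X ∈ B(H) yields a well-defined isometry T_x on H for each x ∈ P, and {T_x}_{x∈P} is a unit for α: α_x(X)T_x = T_x X and T_{x+y} = T_x T_y. -/
/-!
Invariance of `Ω` makes `X Ω ↦ α_x(X) Ω` isometric: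
`‖α_x(X) Ω‖² = ⟪Ω, α_x(X⋆X) Ω⟫ = ⟪Ω, X⋆X Ω⟫ = ‖X Ω‖²`, so `α_x(X) Ω` depends only on `X Ω`.
Since `ξ = |ξ⟩⟨Ω| Ω`, this forces `T_x ξ = α_x(|ξ⟩⟨Ω|) Ω`, a bounded operator for every `x`
because star homomorphisms of C⋆-algebras are contractive. The unit relations then follow from
multiplicativity of `α_x` and the semigroup law.
-/

open ContinuousLinearMap InnerProductSpace

section CanonicalOperator

variable {H : Type*} [NormedAddCommGroup H] [InnerProductSpace ℂ H] {Ω : H}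

theorem rankOne_apply_self_of_norm_eq_one (hΩ : ‖Ω‖ = 1) (ξ : H) : rankOne ℂ ξ Ω Ω = ξ := by
  simp [inner_self_eq_norm_sq_to_K, hΩ]

variable [CompleteSpace H] {φ : (H →L[ℂ] H) →⋆ₐ[ℂ] (H →L[ℂ] H)}

theorem norm_map_apply_eq_of_inner_map_apply (hφ : ∀ X, inner ℂ Ω (φ X Ω) = inner ℂ Ω (X Ω))
    (X : H →L[ℂ] H) : ‖φ X Ω‖ = ‖X Ω‖ := by
  have inner_self_eq (Y : H →L[ℂ] H) : inner ℂ (Y Ω) (Y Ω) = inner ℂ Ω ((star Y * Y) Ω) := by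
    rw [mul_apply_eq_comp, star_eq_adjoint, adjoint_inner_right]
  rw [norm_eq_sqrt_re_inner (𝕜 := ℂ), norm_eq_sqrt_re_inner (𝕜 := ℂ), inner_self_eq,
    inner_self_eq, ← map_star, ← map_mul, hφ]

theorem map_apply_eq_of_apply_eq (hφ : ∀ X, inner ℂ Ω (φ X Ω) = inner ℂ Ω (X Ω))
    {A B : H →L[ℂ] H} (h : A Ω = B Ω) : φ A Ω = φ B Ω := by
  rw [← sub_eq_zero, ← norm_eq_zero, ← sub_apply, ← map_sub,
    norm_map_apply_eq_of_inner_map_apply hφ, sub_apply, h, sub_self, norm_zero]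

noncomputable def canonicalOperator (φ : (H →L[ℂ] H) →⋆ₐ[ℂ] (H →L[ℂ] H)) (Ω : H) :
    H →L[ℂ] H :=
  LinearMap.mkContinuous
    { toFun := fun ξ => φ (rankOne ℂ ξ Ω) Ω
      map_add' := by simp
      map_smul' := by simp }
    (‖Ω‖ * ‖Ω‖) fun ξ => calc
      ‖φ (rankOne ℂ ξ Ω) Ω‖ ≤ ‖φ (rankOne ℂ ξ Ω)‖ * ‖Ω‖ := le_opNorm _ _
      _ ≤ ‖rankOne ℂ ξ Ω‖ * ‖Ω‖ := by gcongr; exact NonUnitalStarAlgHom.norm_apply_le φ _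
      _ = ‖Ω‖ * ‖Ω‖ * ‖ξ‖ := by rw [norm_rankOne]; ring

theorem canonicalOperator_apply (φ : (H →L[ℂ] H) →⋆ₐ[ℂ] (H →L[ℂ] H)) (Ω ξ : H) :
    canonicalOperator φ Ω ξ = φ (rankOne ℂ ξ Ω) Ω := rfl

theorem canonicalOperator_apply_apply (hΩ : ‖Ω‖ = 1)
    (hφ : ∀ X, inner ℂ Ω (φ X Ω) = inner ℂ Ω (X Ω)) (X : H →L[ℂ] H) :
    canonicalOperator φ Ω (X Ω) = φ X Ω :=
  map_apply_eq_of_apply_eq hφ (rankOne_apply_self_of_norm_eq_one hΩ _)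

theorem norm_canonicalOperator_apply (hΩ : ‖Ω‖ = 1)
    (hφ : ∀ X, inner ℂ Ω (φ X Ω) = inner ℂ Ω (X Ω)) (ξ : H) :
    ‖canonicalOperator φ Ω ξ‖ = ‖ξ‖ := by
  rw [canonicalOperator_apply, norm_map_apply_eq_of_inner_map_apply hφ,
    rankOne_apply_self_of_norm_eq_one hΩ]

theorem map_comp_canonicalOperator (hΩ : ‖Ω‖ = 1)
    (hφ : ∀ X, inner ℂ Ω (φ X Ω) = inner ℂ Ω (X Ω)) (X : H →L[ℂ] H) :
    φ X ∘L canonicalOperator φ Ω = canonicalOperator φ Ω ∘L X := by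
  ext ξ
  have hXξ : X ξ = (X * rankOne ℂ ξ Ω) Ω := by
    rw [mul_apply_eq_comp, rankOne_apply_self_of_norm_eq_one hΩ]
  rw [comp_apply, comp_apply, hXξ, canonicalOperator_apply_apply hΩ hφ, map_mul, mul_apply_eq_comp,
    canonicalOperator_apply]

theorem canonicalOperator_comp (ψ : (H →L[ℂ] H) →⋆ₐ[ℂ] (H →L[ℂ] H)) (hΩ : ‖Ω‖ = 1)
    (hφ : ∀ X, inner ℂ Ω (φ X Ω) = inner ℂ Ω (X Ω)) :
    canonicalOperator (φ.comp ψ) Ω = canonicalOperator φ Ω ∘L canonicalOperator ψ Ω := by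
  ext ξ
  rw [comp_apply, canonicalOperator_apply ψ, canonicalOperator_apply_apply hΩ hφ,
    canonicalOperator_apply, StarAlgHom.comp_apply]

end CanonicalOperator

theorem standard_form_canonical_unit_general {d : ℕ}
    {H : Type*} [NormedAddCommGroup H] [InnerProductSpace ℂ H] [CompleteSpace H]
    (P : Set (EuclideanSpace ℝ (Fin d)))
    (α : EuclideanSpace ℝ (Fin d) → (H →L[ℂ] H) →⋆ₐ[ℂ] (H →L[ℂ] H))
    (hsem : ∀ x ∈ P, ∀ y ∈ P, ∀ A : H →L[ℂ] H, α x (α y A) = α (x + y) A)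
    (Ω : H) (hΩ : ‖Ω‖ = 1)
    (hinv : ∀ x ∈ P, ∀ X : H →L[ℂ] H, (inner ℂ Ω (α x X Ω) : ℂ) = inner ℂ Ω (X Ω)) :
    ∃ T : EuclideanSpace ℝ (Fin d) → H →L[ℂ] H,
      (∀ x ∈ P, ∀ ξ : H, ‖T x ξ‖ = ‖ξ‖) ∧
      (∀ x ∈ P, ∀ X : H →L[ℂ] H, T x (X Ω) = α x X Ω) ∧
      (∀ x ∈ P, ∀ X : H →L[ℂ] H, α x X ∘L T x = T x ∘L X) ∧
      (∀ x ∈ P, ∀ y ∈ P, T (x + y) = T x ∘L T y) := by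
  refine ⟨fun x => canonicalOperator (α x) Ω,
    fun x hx => norm_canonicalOperator_apply hΩ (hinv x hx),
    fun x hx => canonicalOperator_apply_apply hΩ (hinv x hx),
    fun x hx => map_comp_canonicalOperator hΩ (hinv x hx), fun x hx y hy => ?_⟩
  have hadd : α (x + y) = (α x).comp (α y) := StarAlgHom.ext fun A => (hsem x hx y hy A).symm
  simp only [hadd, canonicalOperator_comp _ hΩ (hinv x hx)]

/-- For an E₀-semigroup `α` in standard form with invariant unit vector `Ω`, the formula
`T_x (X Ω) = α_x(X) Ω` yields a well-defined family of isometries which is a unit: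
`α_x(X) T_x = T_x X` and `T_{x+y} = T_x T_y`. -/
theorem standard_form_canonical_unit {d : ℕ}
    {H : Type*} [NormedAddCommGroup H] [InnerProductSpace ℂ H] [CompleteSpace H]
    (P : Set (EuclideanSpace ℝ (Fin d)))
    (hclosed : IsClosed P) (hconv : Convex ℝ P)
    (hcone : ∀ (c : ℝ), 0 ≤ c → ∀ x ∈ P, c • x ∈ P)
    (hspan : ∀ x : EuclideanSpace ℝ (Fin d), ∃ a ∈ P, ∃ b ∈ P, x = a - b)
    (hpointed : P ∩ (-P) = {0})
    (α : EuclideanSpace ℝ (Fin d) → (H →L[ℂ] H) →⋆ₐ[ℂ] (H →L[ℂ] H))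
    (hsem : ∀ x ∈ P, ∀ y ∈ P, ∀ A : H →L[ℂ] H, α x (α y A) = α (x + y) A)
    (hzero : ∀ A : H →L[ℂ] H, α 0 A = A)
    (hweak : ∀ (A : H →L[ℂ] H) (ξ η : H),
      ContinuousOn (fun x => (inner ℂ (α x A ξ) η : ℂ)) P)
    (Ω : H) (hΩ : ‖Ω‖ = 1)
    (hinv : ∀ x ∈ P, ∀ X : H →L[ℂ] H, (inner ℂ Ω (α x X Ω) : ℂ) = inner ℂ Ω (X Ω)) :
    ∃ T : EuclideanSpace ℝ (Fin d) → H →L[ℂ] H,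
      (∀ x ∈ P, ∀ ξ : H, ‖T x ξ‖ = ‖ξ‖) ∧
      (∀ x ∈ P, ∀ X : H →L[ℂ] H, T x (X Ω) = α x X Ω) ∧
      (∀ x ∈ P, ∀ X : H →L[ℂ] H, α x X ∘L T x = T x ∘L X) ∧
      (∀ x ∈ P, ∀ y ∈ P, T (x + y) = T x ∘L T y) :=
  standard_form_canonical_unit_general P α hsem Ω hΩ hinv
end

section
/- Let P = ℝ₊^d with d ≥ 2 and A = ∏_{i=1}^d ℝ_i where each ℝ_i ∈ {ℝ, ℝ₊} and at least one ℝ_{i₀} = ℝ₊. Then the shift semigroup {S^A_x}_{x∈P} on L²(A, k) admits no nonzero P-additive cocycle: if h : P → L²(A,k) is continuous with (S^A_x)* h_x = 0 and h_{x+y} = h_x + S^A_x h_y for all x, y ∈ P, then h ≡ 0. -/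
/-!
Since `V_t* h_t = 0`, the function `h_t` vanishes a.e. on `A + t`. Take `w ∈ P` with `w_j = 0` and
`t = e_j`. Then `(A + w) ∩ (A + t) ⊆ A + w + t`, so `V_w h_t ⟂ V_t h_w`; also `h_t ⟂ V_t h_w`.
Pairing `h_w + V_w h_t = h_t + V_t h_w` with `V_t h_w` and using `‖V_t h_w‖ = ‖h_w‖` gives
`V_t h_w = h_w`. But a square-integrable function invariant under translation by `e_j` vanishes:
its mass on the half-space `{y_j ≥ n}` does not depend on `n ∈ ℤ`, tends to `0` as `n → ∞` and
to the total mass as `n → -∞`. So `h_w = 0`. Finally, as `d ≥ 2`, every `x ∈ P` is a sum `y + z` of points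
of `P` each having a vanishing coordinate, and `h_x = h_y + V_y h_z = 0`.
-/

open MeasureTheory ContinuousLinearMap
open Filter Set Topology
open scoped ENNReal InnerProductSpace

section TranslationInvariantMeasure

variable {G : Type*} [MeasurableSpace G]

theorem MeasureTheory.Measure.eq_zero_of_measurePreserving_add [Add G] {μ : Measure G}
    [IsFiniteMeasure μ] {v : G} (hv : MeasurePreserving (· + v) μ μ) {ℓ : G → ℝ} (hℓm : Measurable ℓ)
    (hℓ : ∀ x, ℓ (x + v) = ℓ x + 1) : μ = 0 := by
  set S : ℤ → Set G := fun n => {x | (n : ℝ) ≤ ℓ x}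
  have hSm : ∀ n, MeasurableSet (S n) := fun n => measurableSet_le measurable_const hℓm
  have hS : Antitone S := fun m n hmn x (hx : (n : ℝ) ≤ ℓ x) =>
    (show (m : ℝ) ≤ n by exact_mod_cast hmn).trans hx
  have hstep : ∀ n : ℤ, μ (S (n + 1)) = μ (S n) := by
    intro n
    rw [← hv.measure_preimage (hSm _).nullMeasurableSet]
    congr 1
    ext x
    simp [S, hℓ]
  have hconst : ∀ n, μ (S n) = μ (S 0) := by
    intro n
    induction n using Int.induction_on with
    | zero => rfl
    | succ n ih => rw [hstep, ih]
    | pred n ih => rw [← ih, ← hstep, sub_add_cancel]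
  have hinter : ⋂ n, S n = ∅ := by
    refine eq_empty_of_forall_notMem fun x hx => ?_
    have := mem_iInter.mp hx (⌈ℓ x⌉ + 1)
    simp only [S, mem_ofPred_eq, Int.cast_add, Int.cast_one] at this
    linarith [Int.le_ceil (ℓ x)]
  have hunion : ⋃ n, S n = univ :=
    eq_univ_of_forall fun x => mem_iUnion.mpr ⟨⌊ℓ x⌋, Int.floor_le (ℓ x)⟩
  have hS_const : Tendsto (μ ∘ S) ⊤ (𝓝 (μ (S 0))) :=
    tendsto_const_nhds.congr fun n => (hconst n).symm
  have hS_top : Tendsto (μ ∘ S) atTop (𝓝 0) := by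
    simpa [hinter] using tendsto_measure_iInter_atTop (fun n => (hSm n).nullMeasurableSet) hS
      ⟨0, measure_ne_top μ _⟩
  have hS_bot : Tendsto (μ ∘ S) atBot (𝓝 (μ univ)) := by
    simpa [hunion] using tendsto_measure_iUnion_atBot (μ := μ) hS
  rw [← Measure.measure_univ_eq_zero,
    ← tendsto_nhds_unique (hS_const.mono_left le_top) hS_bot,
    tendsto_nhds_unique (hS_const.mono_left le_top) hS_top]

theorem ae_eq_zero_of_ae_add_eq [AddGroup G] [MeasurableAdd G] {μ : Measure G}
    [μ.IsAddRightInvariant] {E : Type*} [NormedAddCommGroup E] {p : ℝ≥0∞} (hp0 : p ≠ 0)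
    (hp : p ≠ ∞) {F : G → E} (hF : MemLp F p μ) {v : G} (hv : ∀ᵐ x ∂μ, F (x + v) = F x)
    {ℓ : G → ℝ} (hℓm : Measurable ℓ) (hℓ : ∀ x, ℓ (x + v) = ℓ x + 1) : F =ᵐ[μ] 0 := by
  set N : G → ℝ≥0∞ := fun x => ‖F x‖ₑ ^ p.toReal
  have hNm : AEMeasurable N μ := hF.1.enorm.pow_const _
  have : IsFiniteMeasure (μ.withDensity N) :=
    isFiniteMeasure_withDensity (lintegral_rpow_enorm_lt_top_of_eLpNorm_lt_top hp0 hp hF.2).ne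
  have hshift : MeasurePreserving (· + v) (μ.withDensity N) (μ.withDensity N) := by
    refine ⟨measurable_add_const v, Measure.ext fun s hs => ?_⟩
    rw [Measure.map_apply (measurable_add_const v) hs, withDensity_apply _ hs,
      withDensity_apply _ (measurable_add_const v hs),
      ← (measurePreserving_add_right μ v).setLIntegral_comp_preimage_emb
        (measurableEmbedding_addRight v) N s]
    refine setLIntegral_congr_fun_ae (measurable_add_const v hs) ?_
    filter_upwards [hv] with x hx _
    simp only [N, hx]
  have hN : N =ᵐ[μ] 0 := (withDensity_eq_zero_iff hNm).mp
    (Measure.eq_zero_of_measurePreserving_add hshift hℓm hℓ)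
  filter_upwards [hN] with x hx
  simpa [N, ENNReal.toReal_pos hp0 hp] using hx

end TranslationInvariantMeasure

theorem eq_of_add_eq_add_of_inner_eq_zero {𝕜 H : Type*} [RCLike 𝕜] [NormedAddCommGroup H]
    [InnerProductSpace 𝕜 H] {a b c u : H} (h : a + b = c + u) (hb : ⟪b, u⟫_𝕜 = 0)
    (hc : ⟪c, u⟫_𝕜 = 0) (hu : ‖u‖ = ‖a‖) : u = a := by
  have horth : ⟪a - u, u⟫_𝕜 = 0 := by
    rw [sub_eq_sub_iff_add_eq_add.mpr h, inner_sub_left, hb, hc, sub_zero]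
  have hpyth := norm_add_sq_eq_norm_sq_add_norm_sq_of_inner_eq_zero (a - u) u horth
  rw [sub_add_cancel, hu, right_eq_add, mul_self_eq_zero, norm_eq_zero, sub_eq_zero] at hpyth
  exact hpyth.symm

section Shift

variable {G : Type*} [MeasurableSpace G] {μ : Measure G} {𝕜 E : Type*} [RCLike 𝕜]
  [NormedAddCommGroup E] [InnerProductSpace 𝕜 E] {A : Set G}

theorem setIntegral_inner_eq_integral_inner_indicator_left (hA : MeasurableSet A) (F H : G → E) :
    ∫ y in A, ⟪F y, H y⟫_𝕜 ∂μ = ∫ y, ⟪A.indicator F y, H y⟫_𝕜 ∂μ := by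
  rw [← integral_indicator hA]
  congr 1
  ext y
  by_cases hy : y ∈ A <;> simp [hy]

theorem setIntegral_inner_eq_integral_inner_indicator_right (hA : MeasurableSet A) (F H : G → E) :
    ∫ y in A, ⟪F y, H y⟫_𝕜 ∂μ = ∫ y, ⟪F y, A.indicator H y⟫_𝕜 ∂μ := by
  rw [← integral_indicator hA]
  congr 1
  ext y
  by_cases hy : y ∈ A <;> simp [hy]

variable [AddCommGroup G]

def IsShift (μ : Measure G) (A : Set G) (x : G)
    (T : Lp E 2 (μ.restrict A) →L[𝕜] Lp E 2 (μ.restrict A)) : Prop :=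
  ∀ f, ⇑(T f) =ᵐ[μ.restrict A] fun y => A.indicator f (y - x)

variable {x : G} {T : Lp E 2 (μ.restrict A) →L[𝕜] Lp E 2 (μ.restrict A)}

theorem IsShift.indicator_ae_eq (hT : IsShift μ A x T) (hA : MeasurableSet A)
    (hAx : ∀ z ∈ A, z + x ∈ A) (f : Lp E 2 (μ.restrict A)) :
    A.indicator (T f) =ᵐ[μ] fun y => A.indicator f (y - x) := by
  filter_upwards [(ae_restrict_iff' hA).mp (hT f)] with y hy
  by_cases hyA : y ∈ A
  · rw [indicator_of_mem hyA, hy hyA]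
  · have hyxA : y - x ∉ A := fun h => hyA (by simpa using hAx _ h)
    rw [indicator_of_notMem hyA, indicator_of_notMem hyxA]

variable [MeasurableAdd G] [μ.IsAddRightInvariant]

theorem memLp_indicator_comp_add_right (hA : MeasurableSet A) (g : Lp E 2 (μ.restrict A)) (x : G) :
    MemLp (fun z => A.indicator g (z + x)) 2 (μ.restrict A) :=
  (((memLp_indicator_iff_restrict hA).mpr (Lp.memLp g)).comp_measurePreserving
    (measurePreserving_add_right μ x)).restrict A

theorem IsShift.norm_apply (hT : IsShift μ A x T) (hA : MeasurableSet A)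
    (hAx : ∀ z ∈ A, z + x ∈ A) (f : Lp E 2 (μ.restrict A)) : ‖T f‖ = ‖f‖ := by
  rw [Lp.norm_def, Lp.norm_def, ← eLpNorm_indicator_eq_eLpNorm_restrict hA,
    ← eLpNorm_indicator_eq_eLpNorm_restrict hA, eLpNorm_congr_ae (hT.indicator_ae_eq hA hAx f)]
  have hm : AEStronglyMeasurable (A.indicator f) μ :=
    ((memLp_indicator_iff_restrict hA).mpr (Lp.memLp f)).1
  rw [← eLpNorm_comp_measurePreserving hm (measurePreserving_sub_right μ x)]
  rfl

theorem IsShift.inner_apply_left (hT : IsShift μ A x T) (hA : MeasurableSet A)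
    (f g : Lp E 2 (μ.restrict A)) :
    ⟪T f, g⟫_𝕜 = ⟪f, (memLp_indicator_comp_add_right hA g x).toLp⟫_𝕜 := by
  calc ⟪T f, g⟫_𝕜 = ∫ y in A, ⟪A.indicator f (y - x), g y⟫_𝕜 ∂μ := by
        rw [L2.inner_def]
        refine integral_congr_ae ?_
        filter_upwards [hT f] with y hy
        rw [hy]
    _ = ∫ z, ⟪A.indicator f z, A.indicator g (z + x)⟫_𝕜 ∂μ := by
        rw [setIntegral_inner_eq_integral_inner_indicator_right hA,
          ← integral_add_right_eq_self _ x]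
        simp only [add_sub_cancel_right]
    _ = ∫ z in A, ⟪f z, A.indicator g (z + x)⟫_𝕜 ∂μ :=
        (setIntegral_inner_eq_integral_inner_indicator_left hA _ _).symm
    _ = _ := by
        rw [L2.inner_def]
        refine integral_congr_ae ?_
        filter_upwards [MemLp.coeFn_toLp (memLp_indicator_comp_add_right hA g x)] with z hz
        rw [hz]

theorem IsShift.indicator_add_ae_eq_zero [CompleteSpace E] (hT : IsShift μ A x T)
    (hA : MeasurableSet A) {g : Lp E 2 (μ.restrict A)} (hg : adjoint T g = 0) :
    ∀ᵐ z ∂μ.restrict A, A.indicator g (z + x) = 0 := by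
  set W := (memLp_indicator_comp_add_right hA g x).toLp
  have hW : W = 0 := by
    rw [← inner_self_eq_zero (𝕜 := 𝕜), ← hT.inner_apply_left hA, ← adjoint_inner_right, hg,
      inner_zero_right]
  have hW0 := Lp.coeFn_zero E 2 (μ.restrict A)
  rw [← hW] at hW0
  filter_upwards [MemLp.coeFn_toLp (memLp_indicator_comp_add_right hA g x), hW0] with z hz hz0
  rw [← hz, hz0, Pi.zero_apply]

theorem IsShift.inner_apply_apply_eq_zero {w t : G}
    {S T : Lp E 2 (μ.restrict A) →L[𝕜] Lp E 2 (μ.restrict A)} (hS : IsShift μ A w S)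
    (hT : IsShift μ A t T) (hA : MeasurableSet A)
    (hwt : ∀ y, y - w ∈ A → y - t ∈ A → y - w - t ∈ A) {g : Lp E 2 (μ.restrict A)}
    (hg : ∀ᵐ z ∂μ.restrict A, A.indicator g (z + t) = 0) (u : Lp E 2 (μ.restrict A)) :
    ⟪S g, T u⟫_𝕜 = 0 := by
  have hg' : ∀ᵐ y ∂μ, y - w - t ∈ A → A.indicator g (y - w) = 0 := by
    filter_upwards [(measurePreserving_sub_right μ (w + t)).quasiMeasurePreserving.ae
      ((ae_restrict_iff' hA).mp hg)] with y hy hyA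
    simpa [sub_add_eq_sub_sub] using hy (by rwa [sub_add_eq_sub_sub])
  rw [L2.inner_def]
  refine integral_eq_zero_of_ae ?_
  filter_upwards [hS g, hT u, ae_restrict_of_ae hg'] with y hSy hTy hgy
  rw [hSy, hTy, Pi.zero_apply]
  by_cases hyw : y - w ∈ A
  · by_cases hyt : y - t ∈ A
    · rw [hgy (hwt y hyw hyt), inner_zero_left]
    · rw [indicator_of_notMem hyt, inner_zero_right]
  · rw [indicator_of_notMem hyw, inner_zero_left]

theorem IsShift.eq_zero_of_apply_eq_self (hT : IsShift μ A x T) (hA : MeasurableSet A)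
    (hAx : ∀ z ∈ A, z + x ∈ A) {ℓ : G → ℝ} (hℓm : Measurable ℓ) (hℓ : ∀ y, ℓ (y + x) = ℓ y + 1)
    {f : Lp E 2 (μ.restrict A)} (hf : T f = f) : f = 0 := by
  have hinv := hT.indicator_ae_eq hA hAx f
  rw [hf] at hinv
  have hinv' : ∀ᵐ y ∂μ, A.indicator f (y + x) = A.indicator f y := by
    filter_upwards [(measurePreserving_add_right μ x).quasiMeasurePreserving.ae_eq_comp hinv]
      with y hy
    rwa [Function.comp_apply, Function.comp_apply, add_sub_cancel_right] at hy
  have hmem : MemLp (A.indicator f) 2 μ := (memLp_indicator_iff_restrict hA).mpr (Lp.memLp f)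
  have h0 : A.indicator f =ᵐ[μ] 0 :=
    ae_eq_zero_of_ae_add_eq two_ne_zero ENNReal.ofNat_ne_top hmem hinv' hℓm hℓ
  rw [Lp.eq_zero_iff_ae_eq_zero]
  filter_upwards [ae_restrict_of_ae h0, ae_restrict_mem hA] with y hy hyA
  rwa [indicator_of_mem hyA] at hy

theorem IsShift.apply_eq_self_of_add_eq_add [CompleteSpace E] {w t : G}
    {S T : Lp E 2 (μ.restrict A) →L[𝕜] Lp E 2 (μ.restrict A)} (hS : IsShift μ A w S)
    (hT : IsShift μ A t T) (hA : MeasurableSet A) (hAt : ∀ z ∈ A, z + t ∈ A)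
    (hwt : ∀ y, y - w ∈ A → y - t ∈ A → y - w - t ∈ A) {a b : Lp E 2 (μ.restrict A)}
    (hb : adjoint T b = 0) (hab : a + S b = b + T a) : T a = a :=
  eq_of_add_eq_add_of_inner_eq_zero hab
    (hS.inner_apply_apply_eq_zero hT hA hwt (hT.indicator_add_ae_eq_zero hA hb) a)
    (by rw [← adjoint_inner_left, hb, inner_zero_left]) (hT.norm_apply hA hAt a)

end Shift

section Orthant

variable {d : ℕ}

theorem measurableSet_setOf_forall_mem_nonneg (I : Set (Fin d)) :
    MeasurableSet {y : EuclideanSpace ℝ (Fin d) | ∀ i ∈ I, 0 ≤ y i} := by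
  measurability

theorem sub_sub_single_mem_setOf_nonneg {I : Set (Fin d)} {y w : EuclideanSpace ℝ (Fin d)}
    {j : Fin d} (hw : w j = 0) (s : ℝ) (hyw : ∀ i ∈ I, 0 ≤ (y - w) i)
    (hys : ∀ i ∈ I, 0 ≤ (y - EuclideanSpace.single j s) i) :
    ∀ i ∈ I, 0 ≤ (y - w - EuclideanSpace.single j s) i := by
  intro i hi
  by_cases hij : i = j
  · subst hij
    simpa [hw] using hys i hi
  · simpa [PiLp.single_apply, hij] using hyw i hi

theorem exists_add_eq_of_forall_nonneg (hd : 2 ≤ d) {x : EuclideanSpace ℝ (Fin d)}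
    (hx : ∀ i, 0 ≤ x i) :
    ∃ y z : EuclideanSpace ℝ (Fin d), (∀ i, 0 ≤ y i) ∧ (∀ i, 0 ≤ z i) ∧ (∃ i, y i = 0) ∧
      (∃ i, z i = 0) ∧ x = y + z := by
  let i₀ : Fin d := ⟨0, by omega⟩
  let i₁ : Fin d := ⟨1, by omega⟩
  refine ⟨x - EuclideanSpace.single i₀ (x i₀), EuclideanSpace.single i₀ (x i₀), fun i => ?_,
    fun i => ?_, ⟨i₀, by simp⟩, ⟨i₁, ?_⟩, (sub_add_cancel _ _).symm⟩
  · by_cases hi : i = i₀ <;> simp [hi, hx]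
  · by_cases hi : i = i₀ <;> simp [PiLp.single_apply, hi, hx]
  · simp [i₀, i₁]

end Orthant

theorem shift_no_nontrivial_additive_cocycle_general {d : ℕ} (hd : 2 ≤ d)
    {k : Type*} [NormedAddCommGroup k] [InnerProductSpace ℂ k] [CompleteSpace k]
    (P : Set (EuclideanSpace ℝ (Fin d)))
    (hP : P = {y : EuclideanSpace ℝ (Fin d) | ∀ i, 0 ≤ y i})
    (halfIdx : Set (Fin d))
    (A : Set (EuclideanSpace ℝ (Fin d)))
    (hA : A = {y : EuclideanSpace ℝ (Fin d) | ∀ i ∈ halfIdx, 0 ≤ y i})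
    (V : EuclideanSpace ℝ (Fin d) →
      (Lp k 2 (volume.restrict A) →L[ℂ] Lp k 2 (volume.restrict A)))
    (hV : ∀ x ∈ P, ∀ f : Lp k 2 (volume.restrict A),
      (V x f : EuclideanSpace ℝ (Fin d) → k) =ᵐ[volume.restrict A]
        fun y => Set.indicator A (⇑f) (y - x))
    (h : EuclideanSpace ℝ (Fin d) → Lp k 2 (volume.restrict A))
    (hker : ∀ x ∈ P, ContinuousLinearMap.adjoint (V x) (h x) = 0)
    (hcoc : ∀ x ∈ P, ∀ y ∈ P, h (x + y) = h x + V x (h y)) :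
    ∀ x ∈ P, h x = 0 := by
  have hVs : ∀ x ∈ P, IsShift volume A x (V x) := hV
  have hAm : MeasurableSet A := hA ▸ measurableSet_setOf_forall_mem_nonneg halfIdx
  have hPA : ∀ v ∈ P, ∀ z ∈ A, z + v ∈ A := by
    subst hP hA
    exact fun v hv z hz i hi => by simpa using add_nonneg (hz i hi) (hv i)
  have hvanish : ∀ w ∈ P, (∃ j, w j = 0) → h w = 0 := by
    rintro w hw ⟨j, hwj⟩
    let t := EuclideanSpace.single j (1 : ℝ)
    have ht : t ∈ P := by
      subst hP
      intro i
      by_cases hij : i = j <;> simp [t, PiLp.single_apply, hij]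
    have hfix : V t (h w) = h w :=
      (hVs w hw).apply_eq_self_of_add_eq_add (hVs t ht) hAm (hPA t ht)
        (by subst hA; exact fun y => sub_sub_single_mem_setOf_nonneg hwj 1) (hker t ht)
        (by rw [← hcoc w hw t ht, ← hcoc t ht w hw, add_comm])
    exact (hVs t ht).eq_zero_of_apply_eq_self hAm (hPA t ht) (ℓ := fun y => y j)
      (by fun_prop) (fun y => by simp [t]) hfix
  intro x hx
  obtain ⟨y, z, hy, hz, hy0, hz0, rfl⟩ := exists_add_eq_of_forall_nonneg hd (hP ▸ hx)
  have hyP : y ∈ P := hP ▸ hy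
  have hzP : z ∈ P := hP ▸ hz
  rw [hcoc y hyP z hzP, hvanish y hyP hy0, hvanish z hzP hz0, map_zero, add_zero]

/-- For `P = ℝ₊^d` (`d ≥ 2`) and `A = ∏ᵢ ℝᵢ` with each `ℝᵢ ∈ {ℝ, ℝ₊}` and at least one
factor equal to `ℝ₊`, the shift semigroup on `L²(A, k)` admits no nonzero `P`-additive
cocycle. -/
theorem shift_no_nontrivial_additive_cocycle {d : ℕ} (hd : 2 ≤ d)
    {k : Type*} [NormedAddCommGroup k] [InnerProductSpace ℂ k] [CompleteSpace k]
    [SecondCountableTopology k]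
    (P : Set (EuclideanSpace ℝ (Fin d)))
    (hP : P = {y : EuclideanSpace ℝ (Fin d) | ∀ i, 0 ≤ y i})
    (halfIdx : Set (Fin d)) (hhalf_ne : halfIdx.Nonempty)
    (A : Set (EuclideanSpace ℝ (Fin d)))
    (hA : A = {y : EuclideanSpace ℝ (Fin d) | ∀ i ∈ halfIdx, 0 ≤ y i})
    (V : EuclideanSpace ℝ (Fin d) →
      (Lp k 2 (volume.restrict A) →L[ℂ] Lp k 2 (volume.restrict A)))
    (hV : ∀ x ∈ P, ∀ f : Lp k 2 (volume.restrict A),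
      (V x f : EuclideanSpace ℝ (Fin d) → k) =ᵐ[volume.restrict A]
        fun y => Set.indicator A (⇑f) (y - x))
    (h : EuclideanSpace ℝ (Fin d) → Lp k 2 (volume.restrict A))
    (hcont : ContinuousOn h P)
    (hker : ∀ x ∈ P, ContinuousLinearMap.adjoint (V x) (h x) = 0)
    (hcoc : ∀ x ∈ P, ∀ y ∈ P, h (x + y) = h x + V x (h y)) :
    ∀ x ∈ P, h x = 0 :=
  shift_no_nontrivial_additive_cocycle_general hd P hP halfIdx A hA V hV h hker hcoc
end
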